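/- arXiv:1303.3233 — 8 statements merged into one kernel-verified Lean document; each statement's English description precedes it below -/
import Mathlib

section
/- Let p be a PDB over a finite set T of tuples and E a set of hyperedges over T such that the PDB is consistent w.r.t. E. Let S ⊆ T be a set of tuples such that no two distinct tuples of S are connected by a path in the conflict hypergraph (T, E). Then p^min(S) = max{0, Σ_{t∈S} p(t) − |S| + 1}. -/
open Finset

variable {τ : Type*} [Fintype τ] [DecidableEq τ]

/-- An interpretation of a PDB `p`: a probability distribution over possible worlds
(subsets of the set of tuples) whose marginals agree with `p`. -/
def IsInterp (p : τ → ℝ) (Pr : Finset τ → ℝ) : Prop :=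
  (∀ w, 0 ≤ Pr w) ∧ (∑ w : Finset τ, Pr w = 1) ∧
  (∀ t : τ, ∑ w ∈ Finset.univ.filter (fun w => t ∈ w), Pr w = p t)

/-- A model of the PDB `p` w.r.t. the hyperedge set `E`: an interpretation assigning
probability 0 to every world containing some hyperedge of `E`. -/
def IsModel (p : τ → ℝ) (E : Set (Finset τ)) (Pr : Finset τ → ℝ) : Prop :=
  IsInterp p Pr ∧ ∀ w : Finset τ, (∃ e ∈ E, e ⊆ w) → Pr w = 0

/-- The PDB `p` is consistent w.r.t. `E` if a model exists. -/
def Consistent (p : τ → ℝ) (E : Set (Finset τ)) : Prop :=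
  ∃ Pr, IsModel p E Pr

/-- The probability, under `Pr`, that all tuples of `S` co-exist. -/
def coexistProb (Pr : Finset τ → ℝ) (S : Finset τ) : ℝ :=
  ∑ w ∈ Finset.univ.filter (fun w => S ⊆ w), Pr w

/-- A path in a hypergraph with hyperedge set `E`, connecting nodes `n1` and `n2`. -/
def IsHyperPath (E : Set (Finset τ)) (n1 n2 : τ) (l : List (Finset τ)) : Prop :=
  l ≠ [] ∧ l.Nodup ∧ (∀ e ∈ l, e ∈ E) ∧
  (∃ e1 ∈ l.head?, n1 ∈ e1) ∧ (∃ em ∈ l.getLast?, n2 ∈ em) ∧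
  l.Chain' (fun a b => (a ∩ b).Nonempty)

/-!
Lower bound: the worlds containing `S` but not `a` have total probability at most `1 - p a`,
so adding `a` to `S` lowers the probability of coexistence by at most `1 - p a`; induct on `S`.

Upper bound, again by induction on `S`. Let `C` be the connected component of `a` in the
conflict hypergraph: it contains no other tuple of `S`, and every hyperedge lies inside or outside
it. Given a model `Q` with `P(S ⊆ w) = m`, draw two worlds `w₁, w₂` from `Q`, coupled so that the
events `a ∈ w₁` and `S ⊆ w₂` overlap as little as possible (Fréchet: `max 0 (p a + m - 1)`),
and keep `w₁` on `C` and `w₂` off `C`. Each tuple keeps its marginal and each hyperedge lies in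
one of the two halves, so the glued world is again drawn from a model.
-/

lemma mul_div_self_of_imp {G₀ : Type*} [GroupWithZero G₀] {a b : G₀} (h : b = 0 → a = 0) :
    a * (b / b) = a := by
  by_cases hb : b = 0 <;> simp [hb, h]

section Pushforward

variable {α β : Type*} [Fintype α] [DecidableEq β]

def pushforward (f : α → β) (Q : α → ℝ) (b : β) : ℝ :=
  ∑ a ∈ univ.filter (fun a => f a = b), Q a

variable (f : α → β) (Q : α → ℝ)

lemma sum_filter_pushforward [Fintype β] (P : β → Prop) [DecidablePred P] :
    ∑ b ∈ univ.filter P, pushforward f Q b = ∑ a ∈ univ.filter (fun a => P (f a)), Q a := by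
  simp only [pushforward, sum_fiberwise_eq_sum_filter, mem_filter, mem_univ, true_and]

lemma sum_pushforward [Fintype β] : ∑ b, pushforward f Q b = ∑ a, Q a :=
  sum_fiberwise _ _ _

lemma sum_pushforward_mul [Fintype β] (F : β → ℝ) :
    ∑ b, pushforward f Q b * F b = ∑ a, Q a * F (f a) := by
  simp only [pushforward, sum_mul]
  rw [← sum_fiberwise univ f (fun a => Q a * F (f a))]
  refine sum_congr rfl fun b _ => sum_congr rfl fun a ha => ?_
  rw [(mem_filter.1 ha).2]

lemma pushforward_mul_comp (F : β → ℝ) (b : β) :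
    pushforward f (fun a => Q a * F (f a)) b = pushforward f Q b * F b := by
  simp only [pushforward, sum_mul]
  exact sum_congr rfl fun a ha => by rw [(mem_filter.1 ha).2]

lemma pushforward_div_pushforward (b : β) :
    pushforward f (fun a => Q a / pushforward f Q (f a)) b =
      pushforward f Q b / pushforward f Q b := by
  simp only [pushforward, sum_div]
  exact sum_congr rfl fun a ha => by rw [(mem_filter.1 ha).2]

lemma eq_zero_of_pushforward_eq_zero (hQ : ∀ a, 0 ≤ Q a) {a : α}
    (h : pushforward f Q (f a) = 0) : Q a = 0 :=
  le_antisymm (h ▸ single_le_sum (fun a _ => hQ a) (by simp)) (hQ a)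

lemma pushforward_prodMap_mul {α' β' : Type*} [Fintype α'] [DecidableEq β'] (g : α' → β')
    (Q' : α' → ℝ) (b : β) (b' : β') :
    pushforward (Prod.map f g) (fun x => Q x.1 * Q' x.2) (b, b') =
      pushforward f Q b * pushforward g Q' b' := by
  simp only [pushforward, sum_filter, sum_mul_sum, ite_zero_mul_ite_zero, Fintype.sum_prod_type,
    Prod.map, Prod.mk.injEq]

end Pushforward

section Coupling

variable {α β : Type*} [Fintype α] [Fintype β]

structure IsCoupling (Q₁ : α → ℝ) (Q₂ : β → ℝ) (ρ : α × β → ℝ) : Prop where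
  nonneg : ∀ x, 0 ≤ ρ x
  marginal_fst : ∀ a, ∑ b, ρ (a, b) = Q₁ a
  marginal_snd : ∀ b, ∑ a, ρ (a, b) = Q₂ b

variable {Q₁ : α → ℝ} {Q₂ : β → ℝ} {ρ : α × β → ℝ}

namespace IsCoupling

lemma eq_zero_of_fst (h : IsCoupling Q₁ Q₂ ρ) {x : α × β} (hx : Q₁ x.1 = 0) : ρ x = 0 := by
  rw [← h.marginal_fst, sum_eq_zero_iff_of_nonneg fun _ _ => h.nonneg _] at hx
  exact hx x.2 (mem_univ _)

lemma eq_zero_of_snd (h : IsCoupling Q₁ Q₂ ρ) {x : α × β} (hx : Q₂ x.2 = 0) : ρ x = 0 := by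
  rw [← h.marginal_snd, sum_eq_zero_iff_of_nonneg fun _ _ => h.nonneg _] at hx
  exact hx x.1 (mem_univ _)

lemma sum_filter_fst (h : IsCoupling Q₁ Q₂ ρ) (P : α → Prop) [DecidablePred P] :
    ∑ x ∈ univ.filter (fun x => P x.1), ρ x = ∑ a ∈ univ.filter P, Q₁ a := by
  simp only [sum_filter, Fintype.sum_prod_type, ← h.marginal_fst]
  exact sum_congr rfl fun a _ => by split_ifs <;> simp

lemma sum_filter_snd (h : IsCoupling Q₁ Q₂ ρ) (P : β → Prop) [DecidablePred P] :
    ∑ x ∈ univ.filter (fun x => P x.2), ρ x = ∑ b ∈ univ.filter P, Q₂ b := by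
  simp only [sum_filter, Fintype.sum_prod_type_right, ← h.marginal_snd]
  exact sum_congr rfl fun b _ => by split_ifs <;> simp

end IsCoupling

variable {γ₁ γ₂ : Type*} [Fintype γ₁] [Fintype γ₂] [DecidableEq γ₁] [DecidableEq γ₂]

lemma exists_coupling_pushforward_eq (hQ₁ : ∀ a, 0 ≤ Q₁ a) (hQ₂ : ∀ b, 0 ≤ Q₂ b)
    (f : α → γ₁) (g : β → γ₂) {c : γ₁ × γ₂ → ℝ}
    (hc : IsCoupling (pushforward f Q₁) (pushforward g Q₂) c) :
    ∃ ρ, IsCoupling Q₁ Q₂ ρ ∧ pushforward (Prod.map f g) ρ = c := by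
  set P₁ := pushforward f Q₁
  set P₂ := pushforward g Q₂
  set N₁ : α → ℝ := fun a => Q₁ a / P₁ (f a)
  set N₂ : β → ℝ := fun b => Q₂ b / P₂ (g b)
  have hN₁ : ∀ i, pushforward f N₁ i = P₁ i / P₁ i := pushforward_div_pushforward f Q₁
  have hN₂ : ∀ j, pushforward g N₂ j = P₂ j / P₂ j := pushforward_div_pushforward g Q₂
  refine ⟨fun x => N₁ x.1 * N₂ x.2 * c (Prod.map f g x), ⟨fun x => ?_, fun a => ?_, fun b => ?_⟩,
    funext fun ⟨i, j⟩ => ?_⟩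
  · exact mul_nonneg (mul_nonneg (div_nonneg (hQ₁ _) (sum_nonneg fun _ _ => hQ₁ _))
      (div_nonneg (hQ₂ _) (sum_nonneg fun _ _ => hQ₂ _))) (hc.nonneg _)
  · calc ∑ b, N₁ a * N₂ b * c (f a, g b)
        = N₁ a * ∑ j, pushforward g N₂ j * c (f a, j) := by
          simp only [mul_assoc, ← mul_sum, sum_pushforward_mul]
      _ = N₁ a * P₁ (f a) := by
          simp only [hN₂, mul_comm (_ / _), mul_div_self_of_imp fun h => hc.eq_zero_of_snd h,
            hc.marginal_fst]
      _ = Q₁ a := div_mul_cancel_of_imp (eq_zero_of_pushforward_eq_zero f Q₁ hQ₁)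
  · calc ∑ a, N₁ a * N₂ b * c (f a, g b)
        = N₂ b * ∑ i, pushforward f N₁ i * c (i, g b) := by
          simp only [mul_comm _ (N₂ b), mul_assoc, ← mul_sum, sum_pushforward_mul]
      _ = N₂ b * P₂ (g b) := by
          simp only [hN₁, mul_comm (_ / _), mul_div_self_of_imp fun h => hc.eq_zero_of_fst h,
            hc.marginal_snd]
      _ = Q₂ b := div_mul_cancel_of_imp (eq_zero_of_pushforward_eq_zero g Q₂ hQ₂)
  · rw [pushforward_mul_comp, pushforward_prodMap_mul, hN₁, hN₂, mul_comm, ← mul_assoc,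
      mul_div_self_of_imp fun h => hc.eq_zero_of_fst h,
      mul_div_self_of_imp fun h => hc.eq_zero_of_snd h]

def bernoulliMass (s : ℝ) (i : Bool) : ℝ := if i then s else 1 - s

def lowerFrechetCoupling (s t : ℝ) : Bool × Bool → ℝ
  | (true, true) => max 0 (s + t - 1)
  | (true, false) => s - max 0 (s + t - 1)
  | (false, true) => t - max 0 (s + t - 1)
  | (false, false) => 1 - s - t + max 0 (s + t - 1)

lemma isCoupling_lowerFrechetCoupling {s t : ℝ} (hs₀ : 0 ≤ s) (hs₁ : s ≤ 1) (ht₀ : 0 ≤ t)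
    (ht₁ : t ≤ 1) :
    IsCoupling (bernoulliMass s) (bernoulliMass t) (lowerFrechetCoupling s t) where
  nonneg := by
    rintro ⟨_ | _, _ | _⟩ <;> simp only [lowerFrechetCoupling] <;>
      cases max_cases 0 (s + t - 1) <;> linarith
  marginal_fst := by rintro (_ | _) <;> simp [lowerFrechetCoupling, bernoulliMass]
  marginal_snd := by rintro (_ | _) <;> simp [lowerFrechetCoupling, bernoulliMass]; ring

variable {Q : α → ℝ}

lemma sum_filter_mem_Icc (hQ₀ : ∀ a, 0 ≤ Q a) (hQ₁ : ∑ a, Q a = 1) (A : α → Prop)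
    [DecidablePred A] : ∑ a ∈ univ.filter A, Q a ∈ Set.Icc 0 1 :=
  ⟨sum_nonneg fun a _ => hQ₀ a, hQ₁ ▸ sum_le_univ_sum_of_nonneg hQ₀⟩

lemma pushforward_decide (hQ₁ : ∑ a, Q a = 1) (A : α → Prop) [DecidablePred A] :
    pushforward (fun a => decide (A a)) Q = bernoulliMass (∑ a ∈ univ.filter A, Q a) := by
  funext i
  cases i
  · simp only [pushforward, bernoulliMass, ← hQ₁, ← sum_filter_add_sum_filter_not univ A]
    simp
  · simp [pushforward, bernoulliMass]

lemma exists_coupling_sum_filter_eq_max {Q₁ : α → ℝ} {Q₂ : β → ℝ} (hQ₁₀ : ∀ a, 0 ≤ Q₁ a)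
    (hQ₁₁ : ∑ a, Q₁ a = 1) (hQ₂₀ : ∀ b, 0 ≤ Q₂ b) (hQ₂₁ : ∑ b, Q₂ b = 1)
    (A : α → Prop) (B : β → Prop) [DecidablePred A] [DecidablePred B] :
    ∃ ρ, IsCoupling Q₁ Q₂ ρ ∧ ∑ x ∈ univ.filter (fun x => A x.1 ∧ B x.2), ρ x =
      max 0 (∑ a ∈ univ.filter A, Q₁ a + ∑ b ∈ univ.filter B, Q₂ b - 1) := by
  obtain ⟨hs₀, hs₁⟩ := sum_filter_mem_Icc hQ₁₀ hQ₁₁ A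
  obtain ⟨ht₀, ht₁⟩ := sum_filter_mem_Icc hQ₂₀ hQ₂₁ B
  obtain ⟨ρ, hρ, hρc⟩ := exists_coupling_pushforward_eq hQ₁₀ hQ₂₀ (fun a => decide (A a))
    (fun b => decide (B b)) (c := lowerFrechetCoupling _ _)
    (by rw [pushforward_decide hQ₁₁, pushforward_decide hQ₂₁]
        exact isCoupling_lowerFrechetCoupling hs₀ hs₁ ht₀ ht₁)
  refine ⟨ρ, hρ, ?_⟩
  have := congrFun hρc (true, true)
  simpa [pushforward, lowerFrechetCoupling, Prod.map] using this

end Coupling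

section Glue

variable {σ : Type*} [DecidableEq σ]

def glue (C : Finset σ) (x : Finset σ × Finset σ) : Finset σ := x.1 ∩ C ∪ x.2 \ C

variable {C S : Finset σ} {x : Finset σ × Finset σ} {t : σ}

lemma mem_glue_of_mem (ht : t ∈ C) : t ∈ glue C x ↔ t ∈ x.1 := by simp [glue, ht]

lemma mem_glue_of_notMem (ht : t ∉ C) : t ∈ glue C x ↔ t ∈ x.2 := by simp [glue, ht]

lemma subset_glue_iff_of_subset (hS : S ⊆ C) : S ⊆ glue C x ↔ S ⊆ x.1 :=
  forall₂_congr fun _ ht => mem_glue_of_mem (hS ht)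

lemma subset_glue_iff_of_disjoint (hS : Disjoint S C) : S ⊆ glue C x ↔ S ⊆ x.2 :=
  forall₂_congr fun _ ht => mem_glue_of_notMem (disjoint_left.1 hS ht)

end Glue

section FrechetLowerBound

variable {σ : Type*} [DecidableEq σ]

def frechetLowerBound (p : σ → ℝ) (S : Finset σ) : ℝ := (∑ t ∈ S, p t) - (S.card : ℝ) + 1

lemma frechetLowerBound_insert (p : σ → ℝ) {a : σ} {S : Finset σ} (ha : a ∉ S) :
    frechetLowerBound p (insert a S) = frechetLowerBound p S + p a - 1 := by
  rw [frechetLowerBound, frechetLowerBound, sum_insert ha, card_insert_of_notMem ha]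
  push_cast
  ring

end FrechetLowerBound

def IsUnionOfComponents (E : Set (Finset τ)) (C : Finset τ) : Prop :=
  ∀ e ∈ E, e ⊆ C ∨ Disjoint e C

section Models

variable {p : τ → ℝ} {E : Set (Finset τ)} {Pr Q₁ Q₂ : Finset τ → ℝ}

namespace IsInterp

lemma sum_filter_notMem (h : IsInterp p Pr) (t : τ) :
    ∑ w ∈ univ.filter (fun w => t ∉ w), Pr w = 1 - p t := by
  rw [← h.2.1, ← h.2.2 t, ← sum_filter_add_sum_filter_not univ (fun w => t ∈ w)]
  ring

lemma le_one (h : IsInterp p Pr) (t : τ) : p t ≤ 1 :=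
  h.2.2 t ▸ h.2.1 ▸ sum_le_univ_sum_of_nonneg h.1

lemma coexistProb_add_le (h : IsInterp p Pr) (a : τ) (S : Finset τ) :
    coexistProb Pr S + p a - 1 ≤ coexistProb Pr (insert a S) := by
  have hsplit := sum_filter_add_sum_filter_not (univ.filter (fun w => S ⊆ w)) (fun w => a ∈ w) Pr
  have hwith : ∑ w ∈ (univ.filter (fun w => S ⊆ w)).filter (fun w => a ∈ w), Pr w =
      coexistProb Pr (insert a S) := by
    simp only [coexistProb, filter_filter, insert_subset_iff, and_comm]
  have hwithout : ∑ w ∈ (univ.filter (fun w => S ⊆ w)).filter (fun w => a ∉ w), Pr w ≤ 1 - p a :=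
    h.sum_filter_notMem a ▸ sum_le_sum_of_subset_of_nonneg
      (monotone_filter_left _ (filter_subset _ _)) fun w _ _ => h.1 w
  rw [coexistProb]
  linarith

lemma max_zero_frechetLowerBound_le (h : IsInterp p Pr) (S : Finset τ) :
    max 0 (frechetLowerBound p S) ≤ coexistProb Pr S := by
  induction S using Finset.induction_on with
  | empty => simp [frechetLowerBound, coexistProb, h.2.1]
  | insert a S ha ih =>
    rw [frechetLowerBound_insert p ha]
    refine max_le (sum_nonneg fun w _ => h.1 w) ?_
    linarith [le_max_right 0 (frechetLowerBound p S), h.coexistProb_add_le a S]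

end IsInterp

namespace IsModel

lemma pushforward_glue (h₁ : IsModel p E Q₁) (h₂ : IsModel p E Q₂) {C : Finset τ}
    (hC : IsUnionOfComponents E C) {ρ : Finset τ × Finset τ → ℝ} (hρ : IsCoupling Q₁ Q₂ ρ) :
    IsModel p E (pushforward (glue C) ρ) := by
  obtain ⟨⟨-, hQ₁, hp₁⟩, hE₁⟩ := h₁
  obtain ⟨⟨-, -, hp₂⟩, hE₂⟩ := h₂
  refine ⟨⟨fun w => sum_nonneg fun x _ => hρ.nonneg x, ?_, fun t => ?_⟩, ?_⟩
  · rw [sum_pushforward, Fintype.sum_prod_type]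
    simp only [hρ.marginal_fst, hQ₁]
  · rw [sum_filter_pushforward]
    by_cases ht : t ∈ C
    · rw [filter_congr fun x _ => mem_glue_of_mem ht, hρ.sum_filter_fst (t ∈ ·), hp₁]
    · rw [filter_congr fun x _ => mem_glue_of_notMem ht, hρ.sum_filter_snd (t ∈ ·), hp₂]
  · rintro w ⟨e, he, hew⟩
    refine sum_eq_zero fun x hx => ?_
    rw [← (mem_filter.1 hx).2] at hew
    rcases hC e he with heC | heC
    · exact hρ.eq_zero_of_fst (hE₁ _ ⟨e, he, (subset_glue_iff_of_subset heC).1 hew⟩)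
    · exact hρ.eq_zero_of_snd (hE₂ _ ⟨e, he, (subset_glue_iff_of_disjoint heC).1 hew⟩)

lemma exists_coexistProb_insert_eq (hQ : IsModel p E Q₁) {C : Finset τ}
    (hC : IsUnionOfComponents E C) {a : τ} (ha : a ∈ C) {S : Finset τ} (hS : Disjoint S C) :
    ∃ Pr, IsModel p E Pr ∧ coexistProb Pr (insert a S) = max 0 (coexistProb Q₁ S + p a - 1) := by
  obtain ⟨ρ, hρ, hρAS⟩ := exists_coupling_sum_filter_eq_max hQ.1.1 hQ.1.2.1 hQ.1.1 hQ.1.2.1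
    (fun w => a ∈ w) (fun w => S ⊆ w)
  refine ⟨pushforward (glue C) ρ, hQ.pushforward_glue hQ hC hρ, ?_⟩
  rw [coexistProb, sum_filter_pushforward, coexistProb, ← hQ.1.2.2 a, add_comm, ← hρAS]
  refine sum_congr (filter_congr fun x _ => ?_) fun _ _ => rfl
  rw [insert_subset_iff, mem_glue_of_mem ha, subset_glue_iff_of_disjoint hS]

end IsModel

end Models

section HyperPath

variable {σ : Type*} [DecidableEq σ] {E : Set (Finset σ)} {a x y : σ} {e : Finset σ}

lemma isHyperPath_singleton (he : e ∈ E) (hx : x ∈ e) (hy : y ∈ e) : IsHyperPath E x y [e] :=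
  ⟨by simp, by simp, by simpa using he, ⟨e, rfl, hx⟩, ⟨e, rfl, hy⟩, List.isChain_singleton e⟩

lemma IsHyperPath.exists_of_mem_edge {l : List (Finset σ)} (hl : IsHyperPath E a x l)
    (he : e ∈ E) (hx : x ∈ e) (hy : y ∈ e) : ∃ l', IsHyperPath E a y l' := by
  obtain ⟨hne, hnd, hE, hhead, ⟨f, hf, hxf⟩, hchain⟩ := hl
  by_cases hel : e ∈ l
  · obtain ⟨l₁, l₂, rfl⟩ := List.append_of_mem hel
    have hpre : l₁ ++ [e] <+: l₁ ++ e :: l₂ := ⟨l₂, by simp⟩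
    refine ⟨l₁ ++ [e], by simp, hnd.sublist hpre.sublist, fun f hf => hE f (hpre.subset hf),
      ?_, ⟨e, List.getLast?_concat, hy⟩, hchain.prefix hpre⟩
    cases l₁ <;> simpa using hhead
  · refine ⟨l ++ [e], by simp, ?_, ?_, ?_, ⟨e, List.getLast?_concat, hy⟩, ?_⟩
    · exact List.concat_eq_append ▸ hnd.concat hel
    · intro f hf
      rcases List.mem_append.1 hf with hf | hf
      exacts [hE f hf, List.mem_singleton.1 hf ▸ he]
    · rwa [List.head?_append_of_ne_nil _ hne]
    · refine List.isChain_append.2 ⟨hchain, List.isChain_singleton e, fun u hu v hv => ?_⟩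
      obtain rfl : u = f := Option.some.inj (hu.symm.trans hf)
      obtain rfl : e = v := by simpa using hv
      exact ⟨x, mem_inter.2 ⟨hxf, hx⟩⟩

end HyperPath

section Components

variable (E : Set (Finset τ)) (a : τ)

open Classical in
noncomputable def hyperComponent : Finset τ :=
  univ.filter fun x => x = a ∨ ∃ l, IsHyperPath E a x l

variable {E a} in
lemma mem_hyperComponent {x : τ} :
    x ∈ hyperComponent E a ↔ x = a ∨ ∃ l, IsHyperPath E a x l := by
  simp [hyperComponent]

lemma mem_hyperComponent_self : a ∈ hyperComponent E a := mem_hyperComponent.2 (Or.inl rfl)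

lemma isUnionOfComponents_hyperComponent : IsUnionOfComponents E (hyperComponent E a) := by
  intro e he
  refine or_iff_not_imp_right.2 fun hmeet => ?_
  obtain ⟨x, hxe, hxC⟩ := not_disjoint_iff.1 hmeet
  intro y hy
  refine mem_hyperComponent.2 ?_
  rcases mem_hyperComponent.1 hxC with rfl | ⟨l, hl⟩
  · exact Or.inr ⟨[e], isHyperPath_singleton he hxe hy⟩
  · exact Or.inr (hl.exists_of_mem_edge he hxe hy)

end Components

lemma exists_isModel_coexistProb_eq {p : τ → ℝ} {E : Set (Finset τ)} (hcons : Consistent p E)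
    (S : Finset τ) (hdisc : ∀ t1 ∈ S, ∀ t2 ∈ S, t1 ≠ t2 → ¬ ∃ l, IsHyperPath E t1 t2 l) :
    ∃ Pr, IsModel p E Pr ∧ coexistProb Pr S = max 0 (frechetLowerBound p S) := by
  induction S using Finset.induction_on with
  | empty =>
    obtain ⟨Q, hQ⟩ := hcons
    exact ⟨Q, hQ, by simp [coexistProb, frechetLowerBound, hQ.1.2.1]⟩
  | insert a S ha ih =>
    obtain ⟨Q, hQ, hQS⟩ := ih fun t₁ h₁ t₂ h₂ =>
      hdisc t₁ (mem_insert_of_mem h₁) t₂ (mem_insert_of_mem h₂)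
    have hS : Disjoint S (hyperComponent E a) := disjoint_left.2 fun t ht htC => by
      rcases mem_hyperComponent.1 htC with rfl | hpath
      · exact ha ht
      · exact hdisc a (mem_insert_self a S) t (mem_insert_of_mem ht)
          (ne_of_mem_of_not_mem ht ha).symm hpath
    obtain ⟨Pr, hPr, hPrS⟩ := hQ.exists_coexistProb_insert_eq
      (isUnionOfComponents_hyperComponent E a) (mem_hyperComponent_self E a) hS
    refine ⟨Pr, hPr, ?_⟩
    have hpa := hQ.1.le_one a
    rw [hPrS, hQS, frechetLowerBound_insert p ha]
    rcases le_total 0 (frechetLowerBound p S) with h | h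
    · rw [max_eq_right h]
    · rw [max_eq_left h, max_eq_left (by linarith), max_eq_left (by linarith)]

theorem pmin_of_pairwise_disconnected_general
    (p : τ → ℝ)
    (E : Set (Finset τ))
    (hcons : Consistent p E)
    (S : Finset τ)
    (hdisc : ∀ t1 ∈ S, ∀ t2 ∈ S, t1 ≠ t2 → ¬ ∃ l, IsHyperPath E t1 t2 l) :
    IsLeast {x : ℝ | ∃ Pr, IsModel p E Pr ∧ coexistProb Pr S = x}
      (max 0 ((∑ t ∈ S, p t) - (S.card : ℝ) + 1)) :=
  ⟨exists_isModel_coexistProb_eq hcons S hdisc, by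
    rintro _ ⟨Pr, hPr, rfl⟩
    exact hPr.1.max_zero_frechetLowerBound_le S⟩

/-- if no two distinct tuples of `S` are connected by a path in the
conflict hypergraph, then `p^min(S) = max {0, Σ_{t∈S} p(t) − |S| + 1}`. -/
theorem pmin_of_pairwise_disconnected
    (p : τ → ℝ) (hp : ∀ t, 0 ≤ p t ∧ p t ≤ 1)
    (E : Set (Finset τ)) (hedges : ∀ e ∈ E, e.Nonempty)
    (hcons : Consistent p E)
    (S : Finset τ)
    (hdisc : ∀ t1 ∈ S, ∀ t2 ∈ S, t1 ≠ t2 → ¬ ∃ l, IsHyperPath E t1 t2 l) :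
    IsLeast {x : ℝ | ∃ Pr, IsModel p E Pr ∧ coexistProb Pr S = x}
      (max 0 ((∑ t ∈ S, p t) - (S.card : ℝ) + 1)) :=
  pmin_of_pairwise_disconnected_general p E hcons S hdisc
end

section
/- Let p be a PDB over a finite set T of tuples and E a set of hyperedges over T such that the PDB is consistent w.r.t. E. Let S ⊆ T be a set of tuples such that Int(S, H) = { S ∩ e : e ∈ E } is a matryoshka, where H = (T, E) is the conflict hypergraph. Then p^min(S) = max{0, Σ_{t∈S} p(t) − |S| + 1}. -/
/-!
Every interpretation satisfies the Bonferroni inequality `p(S) ≥ Σ_{t ∈ S} p(t) - |S| + 1`, the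
excess being `Σ_w Pr(w) · (|S \ w| - 1)⁺`. The models form a compact set, so some model minimises
`p(S)`. If its value exceeded both `0` and the Bonferroni bound, some world `c ⊇ S` and some world
`d` missing two tuples of `S` would carry mass. Because the traces of the hyperedges on `S` are
nested, one of these two tuples, `t`, can be added to `d` without creating a conflict, and moving
`t` from `c` to `d` (mass `min (Pr c) (Pr d)` goes from `c, d` to `c \ {t}, d ∪ {t}`) keeps every
marginal while lowering `p(S)`.
-/

open Finset

variable {τ : Type*} [Fintype τ] [DecidableEq τ]

/-- A family of sets is a matryoshka if its elements can be arranged in a strictly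
increasing chain under inclusion. -/
def IsMatryoshka (F : Set (Finset τ)) : Prop :=
  ∃ l : List (Finset τ), (∀ s, s ∈ F ↔ s ∈ l) ∧ l.Chain' (· ⊂ ·)


def ConflictFree (E : Set (Finset τ)) (w : Finset τ) : Prop :=
  ∀ e ∈ E, ¬ e ⊆ w

omit [Fintype τ] [DecidableEq τ] in
theorem ConflictFree.anti {E : Set (Finset τ)} {w w' : Finset τ} (hw : ConflictFree E w)
    (h : w' ⊆ w) : ConflictFree E w' :=
  fun e he hew => hw e he (hew.trans h)

omit [Fintype τ] [DecidableEq τ] in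
theorem IsMatryoshka.total {F : Set (Finset τ)} (h : IsMatryoshka F) {a b : Finset τ}
    (ha : a ∈ F) (hb : b ∈ F) : a ⊆ b ∨ b ⊆ a := by
  obtain ⟨l, hl, hchain⟩ := h
  have hpw : l.Pairwise (fun x y : Finset τ => x ⊆ y ∨ y ⊆ x) :=
    (List.isChain_iff_pairwise.mp hchain).imp fun h => Or.inl h.subset
  have : Std.Symm (fun x y : Finset τ => x ⊆ y ∨ y ⊆ x) := ⟨fun _ _ h => h.symm⟩
  rcases eq_or_ne a b with rfl | hne
  · exact Or.inl subset_rfl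
  · exact hpw.forall ((hl a).mp ha) ((hl b).mp hb) hne

omit [Fintype τ] in
/-- If neither of two tuples `t ≠ u` of `S \ w` could be added, the hyperedges created by adding
`t` resp. `u` would have traces on `S` containing `t` resp. `u`; as the traces are nested, one of
these hyperedges contains both tuples, yet it lies inside `insert t w` or `insert u w`. -/
theorem IsMatryoshka.exists_conflictFree_insert {E : Set (Finset τ)} {S w : Finset τ}
    (hmat : IsMatryoshka {s | ∃ e ∈ E, s = S ∩ e}) (hw : ConflictFree E w)
    (h2 : 2 ≤ #(S \ w)) : ∃ t ∈ S \ w, ¬ S ⊆ insert t w ∧ ConflictFree E (insert t w) := by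
  obtain ⟨t, ht, u, hu, htu⟩ := one_lt_card.mp h2
  have missing : ∀ x ∈ S \ w, ∀ y ∈ S \ w, x ≠ y → x ∉ insert y w :=
    fun x hx y _ hxy hxy' => by
    rcases mem_insert.mp hxy' with rfl | hxw
    exacts [hxy rfl, (mem_sdiff.mp hx).2 hxw]
  by_contra! hnone
  have edge : ∀ x ∈ S \ w, ∀ y ∈ S \ w, x ≠ y →
      ∃ e ∈ E, x ∈ S ∩ e ∧ e ⊆ insert x w := fun x hx y hy hxy => by
    have hconf := hnone x hx fun hS => missing y hy x hx hxy.symm (hS (mem_sdiff.mp hy).1)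
    obtain ⟨e, he, hsub⟩ : ∃ e ∈ E, e ⊆ insert x w := by simpa [ConflictFree] using hconf
    refine ⟨e, he, mem_inter.mpr ⟨(mem_sdiff.mp hx).1, ?_⟩, hsub⟩
    by_contra hxe
    exact hw e he ((subset_insert_iff_of_notMem hxe).mp hsub)
  obtain ⟨et, het, htet, hetw⟩ := edge t ht u hu htu
  obtain ⟨eu, heu, hueu, heuw⟩ := edge u hu t ht htu.symm
  rcases hmat.total ⟨et, het, rfl⟩ ⟨eu, heu, rfl⟩ with h | h
  · exact missing t ht u hu htu (heuw (mem_inter.mp (h htet)).2)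
  · exact missing u hu t ht htu.symm (hetw (mem_inter.mp (h hueu)).2)

section Interpretation

variable {p : τ → ℝ} {Pr : Finset τ → ℝ}

theorem coexistProb_nonneg (h : ∀ w, 0 ≤ Pr w) (S : Finset τ) : 0 ≤ coexistProb Pr S :=
  sum_nonneg fun w _ => h w

theorem continuous_coexistProb (S : Finset τ) :
    Continuous fun Pr : Finset τ → ℝ => coexistProb Pr S :=
  continuous_finsetSum _ fun w _ => continuous_apply w

theorem IsInterp.sum_mul_card_inter (h : IsInterp p Pr) (S : Finset τ) :
    ∑ w, Pr w * #(S ∩ w) = ∑ t ∈ S, p t := by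
  have hcard : ∀ w : Finset τ, (#(S ∩ w) : ℝ) = ∑ t ∈ S, if t ∈ w then 1 else 0 :=
    fun w => by rw [sum_boole, filter_mem_eq_inter]
  simp_rw [hcard, mul_sum, mul_boole]
  rw [sum_comm]
  exact sum_congr rfl fun t _ => by rw [← sum_filter, h.2.2 t]

theorem IsInterp.sum_mul_card_sdiff (h : IsInterp p Pr) (S : Finset τ) :
    ∑ w, Pr w * #(S \ w) = #S - ∑ t ∈ S, p t := by
  have hcard : ∀ w : Finset τ, (#(S \ w) : ℝ) = #S - #(S ∩ w) := fun w => by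
    rw [← card_sdiff_add_card_inter S w]; push_cast; ring
  simp_rw [hcard, mul_sub, sum_sub_distrib, ← sum_mul, h.2.1, one_mul, h.sum_mul_card_inter]

omit [Fintype τ] in
theorem cast_card_sdiff_sub_one (S w : Finset τ) :
    ((#(S \ w) - 1 : ℕ) : ℝ) = #(S \ w) - 1 + if S ⊆ w then 1 else 0 := by
  by_cases hS : S ⊆ w
  · simp [hS, sdiff_eq_empty_iff_subset.mpr hS]
  · have : 1 ≤ #(S \ w) := card_pos.mpr (sdiff_nonempty.mpr hS)
    simp [hS, Nat.cast_sub this]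

/-- The weight `#(S \ w) - 1`, truncated in `ℕ`, vanishes exactly on the worlds missing at most
one tuple of `S`. -/
theorem IsInterp.coexistProb_eq (h : IsInterp p Pr) (S : Finset τ) :
    coexistProb Pr S =
      (∑ t ∈ S, p t) - #S + 1 + ∑ w, Pr w * ((#(S \ w) - 1 : ℕ) : ℝ) := by
  simp_rw [cast_card_sdiff_sub_one, mul_add, mul_sub, mul_one, mul_boole, sum_add_distrib,
    sum_sub_distrib, h.sum_mul_card_sdiff, h.2.1, ← sum_filter, coexistProb]
  ring

theorem IsInterp.le_coexistProb (h : IsInterp p Pr) (S : Finset τ) :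
    (∑ t ∈ S, p t) - #S + 1 ≤ coexistProb Pr S := by
  rw [h.coexistProb_eq]
  exact le_add_of_nonneg_right (sum_nonneg fun w _ => mul_nonneg (h.1 w) (Nat.cast_nonneg _))

theorem IsInterp.exists_two_le_card_sdiff (h : IsInterp p Pr) {S : Finset τ}
    (hlt : (∑ t ∈ S, p t) - #S + 1 < coexistProb Pr S) :
    ∃ w, 0 < Pr w ∧ 2 ≤ #(S \ w) := by
  rw [h.coexistProb_eq, lt_add_iff_pos_right, ← sum_const_zero] at hlt
  obtain ⟨w, -, hw⟩ := exists_lt_of_sum_lt hlt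
  have hgap : 0 < #(S \ w) - 1 := by exact_mod_cast pos_of_mul_pos_right hw (h.1 w)
  exact ⟨w, pos_of_mul_pos_left hw (Nat.cast_nonneg _), by omega⟩

end Interpretation

def moveTuple (Pr : Finset τ → ℝ) (ε : ℝ) (t : τ) (c d : Finset τ) : Finset τ → ℝ :=
  Pr - Pi.single c ε - Pi.single d ε + Pi.single (c.erase t) ε + Pi.single (insert t d) ε

section MoveTuple

variable {p : τ → ℝ} {E : Set (Finset τ)} {Pr : Finset τ → ℝ} {ε : ℝ} {t : τ} {c d : Finset τ}

omit [Fintype τ] in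
theorem sum_moveTuple (A : Finset (Finset τ)) :
    ∑ w ∈ A, moveTuple Pr ε t c d w = ∑ w ∈ A, Pr w - (if c ∈ A then ε else 0)
      - (if d ∈ A then ε else 0) + (if c.erase t ∈ A then ε else 0)
      + (if insert t d ∈ A then ε else 0) := by
  simp [moveTuple, sum_add_distrib, sum_sub_distrib, sum_pi_single']

theorem IsInterp.moveTuple (h : IsInterp p Pr) (htc : t ∈ c) (htd : t ∉ d) (hε : 0 ≤ ε)
    (hc : ε ≤ Pr c) (hd : ε ≤ Pr d) : IsInterp p (moveTuple Pr ε t c d) := by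
  have hcd : c ≠ d := fun h => htd (h ▸ htc)
  refine ⟨fun w => ?_, ?_, fun x => ?_⟩
  · simp only [_root_.moveTuple, Pi.add_apply, Pi.sub_apply, Pi.single_apply]
    have := h.1 w
    split_ifs <;> subst_vars <;> first | linarith | exact absurd rfl hcd
  · simp [sum_moveTuple, h.2.1]
  · rw [sum_moveTuple, h.2.2]
    by_cases hx : x = t
    · subst hx; simp [htc, htd]
    · simp only [mem_filter, mem_univ, true_and, mem_erase, ne_eq, hx, not_false_eq_true,
        mem_insert, false_or]
      ring

theorem IsModel.conflictFree (h : IsModel p E Pr) {w : Finset τ} (hw : 0 < Pr w) :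
    ConflictFree E w :=
  fun e he hew => hw.ne' (h.2 w ⟨e, he, hew⟩)

theorem IsModel.moveTuple (h : IsModel p E Pr) (htc : t ∈ c) (htd : t ∉ d) (hε : 0 < ε)
    (hc : ε ≤ Pr c) (hd : ε ≤ Pr d) (hfree : ConflictFree E (insert t d)) :
    IsModel p E (moveTuple Pr ε t c d) := by
  refine ⟨h.1.moveTuple htc htd hε.le hc hd, fun w ⟨e, he, hew⟩ => ?_⟩
  have hfree_c := h.conflictFree (hε.trans_le hc)
  have hfree_d := h.conflictFree (hε.trans_le hd)
  have hwc : w ≠ c := by rintro rfl; exact hfree_c e he hew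
  have hwd : w ≠ d := by rintro rfl; exact hfree_d e he hew
  have hwc' : w ≠ c.erase t := by
    rintro rfl; exact hfree_c.anti (erase_subset t c) e he hew
  have hwd' : w ≠ insert t d := by rintro rfl; exact hfree e he hew
  simp [_root_.moveTuple, hwc, hwd, hwc', hwd', h.2 w ⟨e, he, hew⟩]

theorem coexistProb_moveTuple {S : Finset τ} (hSc : S ⊆ c) (htS : t ∈ S)
    (hSd : ¬ S ⊆ insert t d) : coexistProb (moveTuple Pr ε t c d) S = coexistProb Pr S - ε := by
  have hSd' : ¬ S ⊆ d := fun h => hSd (h.trans (subset_insert t d))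
  have hSc' : ¬ S ⊆ c.erase t := fun h => notMem_erase t c (h htS)
  simp [coexistProb, sum_moveTuple, hSc, hSd, hSd', hSc']

end MoveTuple

section Models

variable {p : τ → ℝ} {E : Set (Finset τ)}

theorem isClosed_setOf_isModel : IsClosed {Pr | IsModel p E Pr} := by
  simp only [IsModel, IsInterp, Set.ofPred_and, Set.ofPred_forall]
  refine .inter (.inter ?_ (.inter ?_ ?_)) ?_
  · exact isClosed_iInter fun w => isClosed_le continuous_const (continuous_apply w)
  · exact isClosed_eq (continuous_finsetSum _ fun w _ => continuous_apply w) continuous_const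
  · exact isClosed_iInter fun t =>
      isClosed_eq (continuous_finsetSum _ fun w _ => continuous_apply w) continuous_const
  · exact isClosed_iInter fun w => isClosed_iInter fun _ =>
      isClosed_eq (continuous_apply w) continuous_const

theorem isCompact_setOf_isModel : IsCompact {Pr | IsModel p E Pr} := by
  refine (isCompact_univ_pi fun _ => isCompact_Icc (a := (0 : ℝ)) (b := 1)).of_isClosed_subset
    isClosed_setOf_isModel ?_
  intro Pr hPr w _
  exact ⟨hPr.1.1 w, hPr.1.2.1 ▸ single_le_sum (fun v _ => hPr.1.1 v) (mem_univ w)⟩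

theorem IsModel.exists_coexistProb_lt {Pr : Finset τ → ℝ} (h : IsModel p E Pr) {S : Finset τ}
    (hmat : IsMatryoshka {s | ∃ e ∈ E, s = S ∩ e}) (hpos : 0 < coexistProb Pr S)
    (hlt : (∑ t ∈ S, p t) - #S + 1 < coexistProb Pr S) :
    ∃ Q, IsModel p E Q ∧ coexistProb Q S < coexistProb Pr S := by
  rw [coexistProb, ← sum_const_zero] at hpos
  obtain ⟨c, hSc, hc⟩ := exists_lt_of_sum_lt hpos
  obtain ⟨d, hd, h2⟩ := h.1.exists_two_le_card_sdiff hlt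
  obtain ⟨t, htSd, hSd, hfree⟩ := hmat.exists_conflictFree_insert (h.conflictFree hd) h2
  obtain ⟨htS, htd⟩ := mem_sdiff.mp htSd
  have hε : 0 < min (Pr c) (Pr d) := lt_min hc hd
  refine ⟨_root_.moveTuple Pr (min (Pr c) (Pr d)) t c d,
    h.moveTuple ((mem_filter.mp hSc).2 htS) htd hε (min_le_left _ _) (min_le_right _ _) hfree, ?_⟩
  rw [coexistProb_moveTuple (mem_filter.mp hSc).2 htS hSd]
  linarith

end Models

theorem pmin_of_matryoshka_general
    (p : τ → ℝ)
    (E : Set (Finset τ))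
    (hcons : Consistent p E)
    (S : Finset τ)
    (hmat : IsMatryoshka {s : Finset τ | ∃ e ∈ E, s = S ∩ e}) :
    IsLeast {x : ℝ | ∃ Pr, IsModel p E Pr ∧ coexistProb Pr S = x}
      (max 0 ((∑ t ∈ S, p t) - (S.card : ℝ) + 1)) := by
  have lower : ∀ Pr, IsModel p E Pr →
      max 0 ((∑ t ∈ S, p t) - (S.card : ℝ) + 1) ≤ coexistProb Pr S :=
    fun Pr h => max_le (coexistProb_nonneg h.1.1 S) (h.1.le_coexistProb S)
  obtain ⟨Pr, hPr, hmin⟩ :=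
    isCompact_setOf_isModel.exists_isMinOn hcons (continuous_coexistProb S).continuousOn
  refine ⟨⟨Pr, hPr, (lower Pr hPr).antisymm' ?_⟩, fun x ⟨Q, hQ, hx⟩ => hx ▸ lower Q hQ⟩
  by_contra! hgt
  obtain ⟨hpos, hbound⟩ := max_lt_iff.mp hgt
  obtain ⟨Q, hQ, hQlt⟩ := hPr.exists_coexistProb_lt hmat hpos hbound
  exact not_lt_of_ge (hmin hQ) hQlt

/-- if `Int(S, H) = { S ∩ e : e ∈ E }` is a matryoshka, then
`p^min(S) = max {0, Σ_{t∈S} p(t) − |S| + 1}`. -/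
theorem pmin_of_matryoshka
    (p : τ → ℝ) (hp : ∀ t, 0 ≤ p t ∧ p t ≤ 1)
    (E : Set (Finset τ)) (hedges : ∀ e ∈ E, e.Nonempty)
    (hcons : Consistent p E)
    (S : Finset τ)
    (hmat : IsMatryoshka {s : Finset τ | ∃ e ∈ E, s = S ∩ e}) :
    IsLeast {x : ℝ | ∃ Pr, IsModel p E Pr ∧ coexistProb Pr S = x}
      (max 0 ((∑ t ∈ S, p t) - (S.card : ℝ) + 1)) :=
  pmin_of_matryoshka_general p E hcons S hmat
end

section
/- Let p be a PDB over a finite set T of tuples and E any set of hyperedges over T. If the PDB is consistent w.r.t. E, then for every hyperedge e ∈ E it holds that Σ_{t∈e} p(t) ≤ |e| − 1. -/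
open Finset

variable {τ : Type*} [Fintype τ] [DecidableEq τ]

/-- if the PDB is consistent w.r.t. `E`, then every hyperedge `e ∈ E`
satisfies `Σ_{t∈e} p(t) ≤ |e| − 1`. -/
theorem consistency_necessary_condition
    (p : τ → ℝ) (hp : ∀ t, 0 ≤ p t ∧ p t ≤ 1)
    (E : Set (Finset τ)) (hedges : ∀ e ∈ E, e.Nonempty)
    (hcons : Consistent p E) :
    ∀ e ∈ E, (∑ t ∈ e, p t) ≤ (e.card : ℝ) - 1 := by
  obtain ⟨Pr, ⟨⟨hnn, hsum, hmarg⟩, hzero⟩⟩ := hcons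
  intro e he
  have key : ∑ t ∈ e, p t = ∑ w : Finset τ, ((e ∩ w).card : ℝ) * Pr w := by
    calc ∑ t ∈ e, p t
        = ∑ t ∈ e, ∑ w ∈ Finset.univ.filter (fun w => t ∈ w), Pr w := by
          exact Finset.sum_congr rfl fun t _ => (hmarg t).symm
      _ = ∑ t ∈ e, ∑ w : Finset τ, if t ∈ w then Pr w else 0 := by
          simp [Finset.sum_filter]
      _ = ∑ w : Finset τ, ∑ t ∈ e, if t ∈ w then Pr w else 0 := Finset.sum_comm
      _ = ∑ w : Finset τ, ((e ∩ w).card : ℝ) * Pr w := by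
          refine Finset.sum_congr rfl fun w _ => ?_
          rw [← Finset.sum_filter, Finset.sum_const, Finset.filter_mem_eq_inter,
            nsmul_eq_mul]
  rw [key]
  have hbound : ∀ w : Finset τ, ((e ∩ w).card : ℝ) * Pr w ≤ ((e.card : ℝ) - 1) * Pr w := by
    intro w
    by_cases h : Pr w = 0
    · simp [h]
    · have hpos : 0 < Pr w := lt_of_le_of_ne (hnn w) (Ne.symm h)
      have hnsub : ¬ e ⊆ w := fun hsub => h (hzero w ⟨e, he, hsub⟩)
      have hlt : (e ∩ w).card < e.card := by
        apply Finset.card_lt_card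
        constructor
        · exact Finset.inter_subset_left
        · intro hle
          exact hnsub (fun t ht => (Finset.mem_inter.mp (hle ht)).2)
      have : ((e ∩ w).card : ℝ) ≤ (e.card : ℝ) - 1 := by
        have := Nat.lt_iff_add_one_le.mp hlt
        have : ((e ∩ w).card + 1 : ℝ) ≤ e.card := by exact_mod_cast this
        linarith
      exact mul_le_mul_of_nonneg_right this (le_of_lt hpos)
  calc ∑ w : Finset τ, ((e ∩ w).card : ℝ) * Pr w
      ≤ ∑ w : Finset τ, ((e.card : ℝ) - 1) * Pr w := Finset.sum_le_sum fun w _ => hbound w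
    _ = ((e.card : ℝ) - 1) * ∑ w : Finset τ, Pr w := by rw [← Finset.mul_sum]
    _ = (e.card : ℝ) - 1 := by rw [hsum, mul_one]
end

section
/- Let p be a PDB over a finite set T of tuples, let B be a family of pairwise disjoint subsets of T (buckets), and let E consist of all 2-element subsets {t, t'} with t ≠ t' belonging to the same bucket K ∈ B. Then the PDB is consistent w.r.t. E if and only if, for every bucket K ∈ B, Σ_{t∈K} p(t) ≤ 1. -/
open Finset

variable {τ : Type*} [Fintype τ] [DecidableEq τ]

/-! ### Auxiliary definitions for the interval construction -/

open MeasureTheory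

section Aux

open Classical in
/-- The bucket containing `t`, if any. -/
noncomputable def bucketOf (B : Set (Finset τ)) (t : τ) : Finset τ :=
  if h : ∃ K ∈ B, t ∈ K then h.choose else ∅

/-- An injection of `τ` into `ℕ`. -/
noncomputable def idx (t : τ) : ℕ := (Fintype.equivFin τ t : ℕ)

lemma idx_injective : Function.Injective (idx (τ := τ)) :=
  fun a b h => (Fintype.equivFin τ).injective (Fin.ext h)

/-- Left endpoint of the interval assigned to tuple `t`. -/
noncomputable def ivlo (p : τ → ℝ) (B : Set (Finset τ)) (t : τ) : ℝ :=
  ∑ s ∈ (bucketOf B t).filter (fun s => idx s < idx t), p s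

/-- The interval assigned to tuple `t`. -/
noncomputable def gset (p : τ → ℝ) (B : Set (Finset τ)) (t : τ) : Set ℝ :=
  Set.Ico (ivlo p B t) (ivlo p B t + p t)

open Classical in
/-- The set of sample points realizing exactly the world `w`. -/
noncomputable def Sset (p : τ → ℝ) (B : Set (Finset τ)) (w : Finset τ) : Set ℝ :=
  Set.Ico 0 1 ∩ ⋂ t, (if t ∈ w then gset p B t else (gset p B t)ᶜ)

lemma bucketOf_mem (B : Set (Finset τ)) {t : τ} (h : ∃ K ∈ B, t ∈ K) :
    bucketOf B t ∈ B ∧ t ∈ bucketOf B t := by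
  classical
  rw [bucketOf, dif_pos h]
  exact ⟨h.choose_spec.1, h.choose_spec.2⟩

lemma bucketOf_eq (B : Set (Finset τ))
    (hdisj : ∀ K1 ∈ B, ∀ K2 ∈ B, K1 ≠ K2 → Disjoint K1 K2)
    {t : τ} {K : Finset τ} (hK : K ∈ B) (ht : t ∈ K) : bucketOf B t = K := by
  obtain ⟨h1, h2⟩ := bucketOf_mem B ⟨K, hK, ht⟩
  by_contra hne
  exact (Finset.disjoint_left.mp (hdisj _ h1 K hK hne) h2) ht

lemma ivlo_nonneg (p : τ → ℝ) (hp : ∀ t, 0 ≤ p t ∧ p t ≤ 1) (B : Set (Finset τ)) (t : τ) :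
    0 ≤ ivlo p B t :=
  Finset.sum_nonneg fun s _ => (hp s).1

lemma ivlo_add_le (p : τ → ℝ) (hp : ∀ t, 0 ≤ p t ∧ p t ≤ 1) (B : Set (Finset τ))
    (hdisj : ∀ K1 ∈ B, ∀ K2 ∈ B, K1 ≠ K2 → Disjoint K1 K2)
    (hB : ∀ K ∈ B, (∑ t ∈ K, p t) ≤ 1) (t : τ) :
    ivlo p B t + p t ≤ 1 := by
  classical
  by_cases h : ∃ K ∈ B, t ∈ K
  · obtain ⟨K, hKB, htK⟩ := h
    have hK' : bucketOf B t = K := bucketOf_eq B hdisj hKB htK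
    have hnm : t ∉ (bucketOf B t).filter (fun s => idx s < idx t) := by simp
    have heq : ivlo p B t + p t
        = ∑ s ∈ insert t ((bucketOf B t).filter (fun s => idx s < idx t)), p s := by
      rw [Finset.sum_insert hnm, ivlo]; ring
    have hsub : insert t ((bucketOf B t).filter (fun s => idx s < idx t)) ⊆ K := by
      intro s hs
      rw [Finset.mem_insert] at hs
      rcases hs with rfl | hs
      · exact htK
      · rw [hK'] at hs; exact (Finset.mem_filter.mp hs).1
    calc ivlo p B t + p t = _ := heq
      _ ≤ ∑ s ∈ K, p s :=
        Finset.sum_le_sum_of_subset_of_nonneg hsub (fun s _ _ => (hp s).1)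
      _ ≤ 1 := hB K hKB
  · have hb : bucketOf B t = ∅ := by
      classical
      rw [bucketOf, dif_neg h]
    rw [ivlo, hb]
    simpa using (hp t).2

lemma gset_subset (p : τ → ℝ) (hp : ∀ t, 0 ≤ p t ∧ p t ≤ 1) (B : Set (Finset τ))
    (hdisj : ∀ K1 ∈ B, ∀ K2 ∈ B, K1 ≠ K2 → Disjoint K1 K2)
    (hB : ∀ K ∈ B, (∑ t ∈ K, p t) ≤ 1) (t : τ) :
    gset p B t ⊆ Set.Ico 0 1 := by
  intro x hx
  obtain ⟨h1, h2⟩ := hx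
  constructor
  · linarith [ivlo_nonneg p hp B t]
  · linarith [ivlo_add_le p hp B hdisj hB t]

lemma gset_disjoint_of_lt (p : τ → ℝ) (hp : ∀ t, 0 ≤ p t ∧ p t ≤ 1) (B : Set (Finset τ))
    (hdisj : ∀ K1 ∈ B, ∀ K2 ∈ B, K1 ≠ K2 → Disjoint K1 K2)
    {K : Finset τ} (hK : K ∈ B) {t1 t2 : τ} (ht1 : t1 ∈ K) (ht2 : t2 ∈ K)
    (hlt : idx t1 < idx t2) :
    gset p B t1 ∩ gset p B t2 = ∅ := by
  classical
  have hb1 : bucketOf B t1 = K := bucketOf_eq B hdisj hK ht1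
  have hb2 : bucketOf B t2 = K := bucketOf_eq B hdisj hK ht2
  have hnm : t1 ∉ (bucketOf B t1).filter (fun s => idx s < idx t1) := by simp
  have hsub : insert t1 ((bucketOf B t1).filter (fun s => idx s < idx t1)) ⊆
      (bucketOf B t2).filter (fun s => idx s < idx t2) := by
    intro s hs
    rw [Finset.mem_insert] at hs
    rw [hb2, Finset.mem_filter]
    rcases hs with rfl | hs
    · exact ⟨ht1, hlt⟩
    · rw [hb1, Finset.mem_filter] at hs
      exact ⟨hs.1, hs.2.trans hlt⟩
  have hle : ivlo p B t1 + p t1 ≤ ivlo p B t2 := by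
    have := Finset.sum_le_sum_of_subset_of_nonneg hsub (fun s _ _ => (hp s).1) (f := p)
    rw [Finset.sum_insert hnm] at this
    rw [ivlo, ivlo]
    linarith
  ext x
  simp only [Set.mem_inter_iff, Set.mem_empty_iff_false, iff_false, gset, Set.mem_Ico]
  rintro ⟨⟨_, ha⟩, ⟨hb, _⟩⟩
  linarith

lemma gset_disjoint (p : τ → ℝ) (hp : ∀ t, 0 ≤ p t ∧ p t ≤ 1) (B : Set (Finset τ))
    (hdisj : ∀ K1 ∈ B, ∀ K2 ∈ B, K1 ≠ K2 → Disjoint K1 K2)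
    {K : Finset τ} (hK : K ∈ B) {t1 t2 : τ} (ht1 : t1 ∈ K) (ht2 : t2 ∈ K)
    (hne : t1 ≠ t2) :
    gset p B t1 ∩ gset p B t2 = ∅ := by
  rcases lt_or_gt_of_ne (fun h => hne (idx_injective h)) with h | h
  · exact gset_disjoint_of_lt p hp B hdisj hK ht1 ht2 h
  · rw [Set.inter_comm]
    exact gset_disjoint_of_lt p hp B hdisj hK ht2 ht1 h

lemma measurableSet_Sset (p : τ → ℝ) (B : Set (Finset τ)) (w : Finset τ) :
    MeasurableSet (Sset p B w) := by
  classical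
  apply MeasurableSet.inter measurableSet_Ico
  apply MeasurableSet.iInter
  intro t
  by_cases h : t ∈ w
  · simp only [if_pos h]; exact measurableSet_Ico
  · simp only [if_neg h]; exact measurableSet_Ico.compl

lemma mem_Sset_iff (p : τ → ℝ) (B : Set (Finset τ)) (w : Finset τ) (x : ℝ) :
    x ∈ Sset p B w ↔ x ∈ Set.Ico (0:ℝ) 1 ∧ ∀ t, (t ∈ w ↔ x ∈ gset p B t) := by
  classical
  simp only [Sset, Set.mem_inter_iff, Set.mem_iInter]
  apply and_congr_right
  intro _
  apply forall_congr'
  intro t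
  by_cases h : t ∈ w <;> simp [h]

lemma Sset_disjoint (p : τ → ℝ) (B : Set (Finset τ)) {w w' : Finset τ} (hne : w ≠ w') :
    Disjoint (Sset p B w) (Sset p B w') := by
  rw [Set.disjoint_left]
  intro x hx hx'
  rw [mem_Sset_iff] at hx hx'
  apply hne
  ext t
  rw [hx.2 t, hx'.2 t]

lemma Sset_union (p : τ → ℝ) (B : Set (Finset τ)) :
    ⋃ w : Finset τ, Sset p B w = Set.Ico (0:ℝ) 1 := by
  classical
  ext x
  simp only [Set.mem_iUnion]
  constructor
  · rintro ⟨w, hw⟩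
    exact ((mem_Sset_iff p B w x).mp hw).1
  · intro hx
    refine ⟨Finset.univ.filter (fun t => x ∈ gset p B t), ?_⟩
    rw [mem_Sset_iff]
    refine ⟨hx, fun t => ?_⟩
    simp

lemma Sset_subset_gset (p : τ → ℝ) (B : Set (Finset τ)) {w : Finset τ} {t : τ}
    (ht : t ∈ w) : Sset p B w ⊆ gset p B t := by
  intro x hx
  exact ((mem_Sset_iff p B w x).mp hx).2 t |>.mp ht

lemma Sset_marginal (p : τ → ℝ) (hp : ∀ t, 0 ≤ p t ∧ p t ≤ 1) (B : Set (Finset τ))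
    (hdisj : ∀ K1 ∈ B, ∀ K2 ∈ B, K1 ≠ K2 → Disjoint K1 K2)
    (hB : ∀ K ∈ B, (∑ t ∈ K, p t) ≤ 1) (t : τ) :
    ⋃ w ∈ Finset.univ.filter (fun w => t ∈ w), Sset p B w = gset p B t := by
  classical
  ext x
  simp only [Set.mem_iUnion, Finset.mem_filter, Finset.mem_univ, true_and]
  constructor
  · rintro ⟨w, htw, hw⟩
    exact Sset_subset_gset p B htw hw
  · intro hx
    have hx01 : x ∈ Set.Ico (0:ℝ) 1 := gset_subset p hp B hdisj hB t hx
    refine ⟨Finset.univ.filter (fun s => x ∈ gset p B s), by simpa using hx, ?_⟩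
    rw [mem_Sset_iff]
    refine ⟨hx01, fun s => ?_⟩
    simp

end Aux

/-- for buckets `B` (pairwise disjoint sets of tuples), with the conflict
graph consisting of all pairs of distinct tuples of a same bucket, the PDB is consistent
iff for every bucket `K`, `Σ_{t∈K} p(t) ≤ 1`. -/
theorem consistency_buckets
    (p : τ → ℝ) (hp : ∀ t, 0 ≤ p t ∧ p t ≤ 1)
    (B : Set (Finset τ))
    (hdisj : ∀ K1 ∈ B, ∀ K2 ∈ B, K1 ≠ K2 → Disjoint K1 K2) :
    Consistent p
        {e : Finset τ | ∃ K ∈ B, ∃ t1 ∈ K, ∃ t2 ∈ K, t1 ≠ t2 ∧ e = {t1, t2}} ↔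
      ∀ K ∈ B, (∑ t ∈ K, p t) ≤ 1 := by
  classical
  constructor
  · rintro ⟨Pr, ⟨⟨hnn, hsum, hmarg⟩, hconf⟩⟩ K hK
    have key : ∀ w : Finset τ, ((K ∩ w).card : ℝ) * Pr w ≤ Pr w := by
      intro w
      by_cases h : (K ∩ w).card ≤ 1
      · have h' : ((K ∩ w).card : ℝ) ≤ 1 := by exact_mod_cast h
        nlinarith [hnn w]
      · push_neg at h
        obtain ⟨t1, ht1, t2, ht2, hne12⟩ := Finset.one_lt_card.mp h
        have hz : Pr w = 0 := by
          apply hconf w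
          refine ⟨{t1, t2}, ⟨K, hK, t1, (Finset.mem_inter.mp ht1).1, t2,
            (Finset.mem_inter.mp ht2).1, hne12, rfl⟩, ?_⟩
          intro x hx
          rw [Finset.mem_insert, Finset.mem_singleton] at hx
          rcases hx with rfl | rfl
          · exact (Finset.mem_inter.mp ht1).2
          · exact (Finset.mem_inter.mp ht2).2
        simp [hz]
    have step1 : ∑ t ∈ K, p t = ∑ w : Finset τ, ((K ∩ w).card : ℝ) * Pr w := by
      have : ∀ t ∈ K, p t = ∑ w : Finset τ, if t ∈ w then Pr w else 0 := by
        intro t _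
        rw [← hmarg t, Finset.sum_filter]
      rw [Finset.sum_congr rfl this, Finset.sum_comm]
      apply Finset.sum_congr rfl
      intro w _
      rw [Finset.sum_ite_mem, Finset.sum_const, nsmul_eq_mul]
    calc ∑ t ∈ K, p t = ∑ w : Finset τ, ((K ∩ w).card : ℝ) * Pr w := step1
      _ ≤ ∑ w : Finset τ, Pr w := Finset.sum_le_sum (fun w _ => key w)
      _ = 1 := hsum
  · intro hB
    refine ⟨fun w => (volume (Sset p B w)).toReal, ⟨⟨fun w => ENNReal.toReal_nonneg, ?_, ?_⟩, ?_⟩⟩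
    · -- total mass 1
      have hmeas : ∀ w ∈ Finset.univ, MeasurableSet (Sset p B w) :=
        fun w _ => measurableSet_Sset p B w
      have hdisj' : (↑(Finset.univ : Finset (Finset τ)) : Set (Finset τ)).PairwiseDisjoint
          (Sset p B) := fun w _ w' _ hne => Sset_disjoint p B hne
      have hvol : ∑ w : Finset τ, volume (Sset p B w) = volume (Set.Ico (0:ℝ) 1) := by
        rw [← measure_biUnion_finset hdisj' hmeas]
        congr 1
        rw [← Sset_union p B]
        simp
      have hfin : ∀ w ∈ (Finset.univ : Finset (Finset τ)), volume (Sset p B w) ≠ ⊤ := by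
        intro w _
        have hle : volume (Sset p B w) ≤ volume (Set.Ico (0:ℝ) 1) :=
          measure_mono (fun x hx => ((mem_Sset_iff p B w x).mp hx).1)
        intro htop
        rw [htop] at hle
        simp [Real.volume_Ico] at hle
      rw [← ENNReal.toReal_sum hfin, hvol]
      simp [Real.volume_Ico]
    · -- marginals
      intro t
      have hmeas : ∀ w ∈ Finset.univ.filter (fun w => t ∈ w), MeasurableSet (Sset p B w) :=
        fun w _ => measurableSet_Sset p B w
      have hdisj' : ((Finset.univ.filter (fun w : Finset τ => t ∈ w) :
          Finset (Finset τ)) : Set (Finset τ)).PairwiseDisjoint (Sset p B) :=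
        fun w _ w' _ hne => Sset_disjoint p B hne
      have hfin : ∀ w ∈ Finset.univ.filter (fun w => t ∈ w),
          volume (Sset p B w) ≠ ⊤ := by
        intro w _
        have hle : volume (Sset p B w) ≤ volume (Set.Ico (0:ℝ) 1) :=
          measure_mono (fun x hx => ((mem_Sset_iff p B w x).mp hx).1)
        intro htop
        rw [htop] at hle
        simp [Real.volume_Ico] at hle
      rw [← ENNReal.toReal_sum hfin, ← measure_biUnion_finset hdisj' hmeas,
        Sset_marginal p hp B hdisj hB t, gset, Real.volume_Ico]
      simp [ENNReal.toReal_ofReal (hp t).1]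
    · -- conflicts
      rintro w ⟨e, ⟨K, hK, t1, ht1, t2, ht2, hne12, rfl⟩, hsub⟩
      have h1 : t1 ∈ w := hsub (by simp)
      have h2 : t2 ∈ w := hsub (by simp)
      have : Sset p B w ⊆ gset p B t1 ∩ gset p B t2 :=
        Set.subset_inter (Sset_subset_gset p B h1) (Sset_subset_gset p B h2)
      rw [gset_disjoint p hp B hdisj hK ht1 ht2 hne12] at this
      have : Sset p B w = ∅ := Set.subset_empty_iff.mp this
      simp [this]
end

section
/- Let p be a PDB over a finite set T of tuples, let x : T → X and z : T → Z be functions, and let E consist of all 2-element subsets {t_1, t_2} of distinct tuples with x(t_1) = x(t_2) and z(t_1) ≠ z(t_2) (the conflict graph of the functional dependency x → z). Then the PDB is consistent w.r.t. E if and only if, for every value v in the image of x, Σ_{c} max{ p(t) : t ∈ T, x(t) = v, z(t) = c } ≤ 1, where the sum ranges over the values c ∈ Z such that some tuple t with x(t) = v has z(t) = c. -/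
open Finset

variable {τ : Type*} [Fintype τ] [DecidableEq τ]

section FDAux

variable {X Z : Type*} [DecidableEq X] [DecidableEq Z]

/-- The group of tuples with `x`-value `v` and `z`-value `c`. -/
def grp (x : τ → X) (z : τ → Z) (v : X) (c : Z) : Finset τ :=
  Finset.univ.filter (fun t => x t = v ∧ z t = c)

lemma mem_grp {x : τ → X} {z : τ → Z} {v : X} {c : Z} {t : τ} :
    t ∈ grp x z v c ↔ x t = v ∧ z t = c := by
  simp [grp]

lemma sSup_set_eq (p : τ → ℝ) (x : τ → X) (z : τ → Z) (v : X) (c : Z)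
    (h : (grp x z v c).Nonempty) :
    sSup {r : ℝ | ∃ t, x t = v ∧ z t = c ∧ p t = r}
      = ((grp x z v c).image p).max' (h.image p) := by
  have hset : {r : ℝ | ∃ t, x t = v ∧ z t = c ∧ p t = r}
      = ↑((grp x z v c).image p) := by
    ext r
    simp only [Set.mem_setOf_eq, Finset.coe_image, Set.mem_image, Finset.mem_coe, mem_grp]
    tauto
  rw [hset]
  exact (h.image p).csSup_eq_max'

end FDAux

/-- for the conflict graph of the functional dependency `x → z`
(edges between distinct tuples agreeing on `x` and disagreeing on `z`), the PDB
is consistent iff for every value `v` in the image of `x`,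
`Σ_c max{ p(t) : x(t) = v, z(t) = c } ≤ 1`, the sum ranging over the `z`-values `c`
occurring among the tuples with `x(t) = v`. -/
theorem consistency_fd
    {X Z : Type*} [DecidableEq X] [DecidableEq Z]
    (p : τ → ℝ) (hp : ∀ t, 0 ≤ p t ∧ p t ≤ 1)
    (x : τ → X) (z : τ → Z) :
    Consistent p
        {e : Finset τ | ∃ t1 t2 : τ, t1 ≠ t2 ∧ x t1 = x t2 ∧ z t1 ≠ z t2 ∧
          e = {t1, t2}} ↔
      ∀ v : X, (∃ t, x t = v) →
        (∑ c ∈ (Finset.univ.filter (fun t => x t = v)).image z,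
          sSup {r : ℝ | ∃ t, x t = v ∧ z t = c ∧ p t = r}) ≤ 1 := by
  classical
  set S : X → Z → ℝ := fun v c => sSup {r : ℝ | ∃ t, x t = v ∧ z t = c ∧ p t = r} with hS
  set Cs : X → Finset Z := fun v => (Finset.univ.filter (fun t => x t = v)).image z with hCs
  have hmemCs : ∀ (v : X) (c : Z), c ∈ Cs v ↔ (grp x z v c).Nonempty := by
    intro v c
    simp only [hCs, Finset.mem_image, Finset.mem_filter, Finset.mem_univ, true_and,
      Finset.Nonempty, mem_grp]
  -- for every tuple, p t ≤ S (x t) (z t), and S ≥ 0 on relevant values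
  have hSmax : ∀ (v : X) (c : Z) (h : (grp x z v c).Nonempty),
      S v c = ((grp x z v c).image p).max' (h.image p) := fun v c h => sSup_set_eq p x z v c h
  have hSle : ∀ t : τ, p t ≤ S (x t) (z t) := by
    intro t
    have ht : t ∈ grp x z (x t) (z t) := mem_grp.2 ⟨rfl, rfl⟩
    rw [hSmax (x t) (z t) ⟨t, ht⟩]
    exact Finset.le_max' _ _ (Finset.mem_image_of_mem p ht)
  have hSexists : ∀ (v : X) (c : Z), (grp x z v c).Nonempty →
      ∃ t, (x t = v ∧ z t = c) ∧ p t = S v c := by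
    intro v c h
    rw [hSmax v c h]
    obtain ⟨r, hr, hreq⟩ := Finset.mem_image.1 (((grp x z v c).image p).max'_mem (h.image p))
    exact ⟨r, mem_grp.1 hr, hreq⟩
  have hS0 : ∀ (v : X) (c : Z), c ∈ Cs v → 0 ≤ S v c := by
    intro v c hc
    obtain ⟨t, _, hpt⟩ := hSexists v c ((hmemCs v c).1 hc)
    exact hpt ▸ (hp t).1
  constructor
  · -- forward direction
    rintro ⟨Pr, ⟨⟨hPr0, hPr1, hPrm⟩, hPrE⟩⟩ v ⟨t0, ht0⟩
    have hex : ∀ c : Z, ∃ t : τ, c ∈ Cs v → ((x t = v ∧ z t = c) ∧ p t = S v c) := by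
      intro c
      by_cases hc : c ∈ Cs v
      · obtain ⟨t, ht⟩ := hSexists v c ((hmemCs v c).1 hc)
        exact ⟨t, fun _ => ht⟩
      · exact ⟨t0, fun h => absurd h hc⟩
    choose tc htc using hex
    have htc1 : ∀ c ∈ Cs v, x (tc c) = v ∧ z (tc c) = c := fun c hc => (htc c hc).1
    have htc2 : ∀ c ∈ Cs v, p (tc c) = S v c := fun c hc => (htc c hc).2
    calc (∑ c ∈ Cs v, S v c) = ∑ c ∈ Cs v, p (tc c) :=
          Finset.sum_congr rfl (fun c hc => (htc2 c hc).symm)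
      _ = ∑ c ∈ Cs v, ∑ w : Finset τ, if tc c ∈ w then Pr w else 0 := by
          refine Finset.sum_congr rfl (fun c _ => ?_)
          rw [← hPrm (tc c), Finset.sum_filter]
      _ = ∑ w : Finset τ, ∑ c ∈ Cs v, if tc c ∈ w then Pr w else 0 := Finset.sum_comm
      _ ≤ ∑ w : Finset τ, Pr w := by
          apply Finset.sum_le_sum
          intro w _
          rw [← Finset.sum_filter, Finset.sum_const, nsmul_eq_mul]
          by_cases hw : Pr w = 0
          · simp [hw]
          · have hcard : ((Cs v).filter (fun c => tc c ∈ w)).card ≤ 1 := by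
              by_contra hlt
              push_neg at hlt
              obtain ⟨c1, hc1, c2, hc2, hne⟩ := Finset.one_lt_card.1 hlt
              rw [Finset.mem_filter] at hc1 hc2
              have h1 := htc1 c1 hc1.1
              have h2 := htc1 c2 hc2.1
              have htne : tc c1 ≠ tc c2 := by
                intro h; apply hne; rw [← h1.2, ← h2.2, h]
              apply hw
              apply hPrE
              refine ⟨{tc c1, tc c2}, ⟨tc c1, tc c2, htne, by rw [h1.1, h2.1],
                by rw [h1.2, h2.2]; exact hne, rfl⟩, ?_⟩
              intro t ht
              rcases Finset.mem_insert.1 ht with h | h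
              · exact h ▸ hc1.2
              · exact (Finset.mem_singleton.1 h) ▸ hc2.2
            calc (((Cs v).filter (fun c => tc c ∈ w)).card : ℝ) * Pr w
                ≤ 1 * Pr w := by
                  apply mul_le_mul_of_nonneg_right _ (hPr0 w)
                  exact_mod_cast hcard
              _ = Pr w := one_mul _
      _ = 1 := hPr1
  · -- backward direction: construct a model
    intro H
    -- an injective enumeration of tuples, used to linearly order the z-classes
    set f : τ → ℕ := fun t => ((Fintype.equivFin τ) t : ℕ) with hf
    have hfinj : Function.Injective f := fun a b h =>
      (Fintype.equivFin τ).injective (Fin.val_injective h)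
    set key : X → Z → ℕ := fun v c =>
      if h : (grp x z v c).Nonempty then (grp x z v c).inf' h f else 0 with hkey
    have hkeyinj : ∀ (v : X) (c1 c2 : Z), c1 ∈ Cs v → c2 ∈ Cs v →
        key v c1 = key v c2 → c1 = c2 := by
      intro v c1 c2 hc1 hc2 hk
      have h1 := (hmemCs v c1).1 hc1
      have h2 := (hmemCs v c2).1 hc2
      rw [hkey] at hk
      simp only [dif_pos h1, dif_pos h2] at hk
      obtain ⟨t1, ht1, he1⟩ := Finset.exists_mem_eq_inf' h1 f
      obtain ⟨t2, ht2, he2⟩ := Finset.exists_mem_eq_inf' h2 f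
      have : t1 = t2 := hfinj (by rw [← he1, ← he2, hk])
      rw [← (mem_grp.1 ht1).2, this, (mem_grp.1 ht2).2]
    -- left endpoints of the intervals
    set a : τ → ℝ := fun t =>
      ∑ c ∈ (Cs (x t)).filter (fun c => key (x t) c < key (x t) (z t)), S (x t) c with ha
    have hztCs : ∀ t : τ, z t ∈ Cs (x t) :=
      fun t => (hmemCs (x t) (z t)).2 ⟨t, mem_grp.2 ⟨rfl, rfl⟩⟩
    have ha0 : ∀ t, 0 ≤ a t := by
      intro t
      apply Finset.sum_nonneg
      intro c hc
      exact hS0 (x t) c (Finset.mem_filter.1 hc).1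
    have hfull : ∀ t, a t + S (x t) (z t) ≤ 1 := by
      intro t
      have hnot : z t ∉ (Cs (x t)).filter (fun c => key (x t) c < key (x t) (z t)) := by
        simp
      have hsub : insert (z t) ((Cs (x t)).filter (fun c => key (x t) c < key (x t) (z t)))
          ⊆ Cs (x t) := by
        intro c hc
        rcases Finset.mem_insert.1 hc with h | h
        · exact h ▸ hztCs t
        · exact (Finset.mem_filter.1 h).1
      calc a t + S (x t) (z t)
          = ∑ c ∈ insert (z t) ((Cs (x t)).filter
              (fun c => key (x t) c < key (x t) (z t))), S (x t) c := by
            rw [Finset.sum_insert hnot]; ring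
        _ ≤ ∑ c ∈ Cs (x t), S (x t) c :=
            Finset.sum_le_sum_of_subset_of_nonneg hsub
              (fun c hc _ => hS0 (x t) c hc)
        _ ≤ 1 := H (x t) ⟨t, rfl⟩
    have hub : ∀ t, a t + p t ≤ 1 := fun t => by
      have := hSle t; have := hfull t; linarith
    -- key ordering forces interval separation
    have hsep : ∀ t1 t2 : τ, x t1 = x t2 → key (x t1) (z t1) < key (x t1) (z t2) →
        a t1 + p t1 ≤ a t2 := by
      intro t1 t2 hx hk
      have hnot : z t1 ∉ (Cs (x t1)).filter (fun c => key (x t1) c < key (x t1) (z t1)) := by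
        simp
      have ha2 : a t2 = ∑ c ∈ (Cs (x t1)).filter
          (fun c => key (x t1) c < key (x t1) (z t2)), S (x t1) c := by
        rw [ha]; simp only [← hx]
      have hsub : insert (z t1) ((Cs (x t1)).filter
          (fun c => key (x t1) c < key (x t1) (z t1)))
          ⊆ (Cs (x t1)).filter (fun c => key (x t1) c < key (x t1) (z t2)) := by
        intro c hc
        rcases Finset.mem_insert.1 hc with h | h
        · subst h; exact Finset.mem_filter.2 ⟨hztCs t1, hk⟩
        · rcases Finset.mem_filter.1 h with ⟨h1, h2⟩
          exact Finset.mem_filter.2 ⟨h1, h2.trans hk⟩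
      have : a t1 + S (x t1) (z t1) ≤ a t2 := by
        rw [ha2]
        calc a t1 + S (x t1) (z t1)
            = ∑ c ∈ insert (z t1) ((Cs (x t1)).filter
                (fun c => key (x t1) c < key (x t1) (z t1))), S (x t1) c := by
              rw [Finset.sum_insert hnot]; ring
          _ ≤ _ := Finset.sum_le_sum_of_subset_of_nonneg hsub
              (fun c hc _ => hS0 (x t1) c (Finset.mem_filter.1 hc).1)
      have := hSle t1; linarith
    -- the intervals
    set I : τ → Set ℝ := fun t => Set.Ico (a t) (a t + p t) with hI
    have hdisjI : ∀ t1 t2 : τ, x t1 = x t2 → z t1 ≠ z t2 → Disjoint (I t1) (I t2) := by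
      intro t1 t2 hx hz
      have hk12 : key (x t1) (z t1) ≠ key (x t1) (z t2) := by
        intro h
        exact hz (hkeyinj (x t1) (z t1) (z t2) (hztCs t1) (hx ▸ hztCs t2) h)
      rw [Set.disjoint_left]
      rintro u hu1 hu2
      rw [hI, Set.mem_Ico] at hu1 hu2
      rcases lt_or_gt_of_ne hk12 with h | h
      · have := hsep t1 t2 hx h; linarith
      · have := hsep t2 t1 hx.symm (by rw [← hx]; exact h); linarith
    have hIsub : ∀ t, I t ⊆ Set.Ico (0:ℝ) 1 := by
      intro t u hu
      rw [hI, Set.mem_Ico] at hu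
      have := ha0 t; have := hub t
      exact Set.mem_Ico.2 ⟨by linarith, by linarith⟩
    -- the cells of the partition of [0,1)
    set A : Finset τ → Set ℝ := fun w =>
      Set.Ico (0:ℝ) 1 ∩ ⋂ t : τ, (if t ∈ w then I t else (I t)ᶜ) with hA
    have hmemA : ∀ (u : ℝ) (w : Finset τ),
        u ∈ A w ↔ (u ∈ Set.Ico (0:ℝ) 1 ∧ ∀ t, t ∈ w ↔ u ∈ I t) := by
      intro u w
      rw [hA]
      simp only [Set.mem_inter_iff, Set.mem_iInter]
      constructor
      · rintro ⟨h1, h2⟩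
        refine ⟨h1, fun t => ?_⟩
        have := h2 t
        by_cases h : t ∈ w <;> simp [h] at this ⊢ <;> tauto
      · rintro ⟨h1, h2⟩
        refine ⟨h1, fun t => ?_⟩
        by_cases h : t ∈ w <;> simp [h, ← h2 t]
    have hmeasA : ∀ w, MeasurableSet (A w) := by
      intro w
      apply measurableSet_Ico.inter
      apply MeasurableSet.iInter
      intro t
      by_cases h : t ∈ w <;>
        simp only [h, if_true, if_false, hI] <;>
        first
          | exact measurableSet_Ico
          | exact measurableSet_Ico.compl
    have hAsub : ∀ w, A w ⊆ Set.Ico (0:ℝ) 1 := fun w => Set.inter_subset_left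
    have hAdisj : ∀ w1 w2 : Finset τ, w1 ≠ w2 → Disjoint (A w1) (A w2) := by
      intro w1 w2 hne
      rw [Set.disjoint_left]
      rintro u hu1 hu2
      rw [hmemA] at hu1 hu2
      exact hne (Finset.ext fun t => (hu1.2 t).trans (hu2.2 t).symm)
    have hAcover : ⋃ w ∈ (Finset.univ : Finset (Finset τ)), A w = Set.Ico (0:ℝ) 1 := by
      apply Set.Subset.antisymm
      · exact Set.iUnion₂_subset fun w _ => hAsub w
      · intro u hu
        refine Set.mem_biUnion (Finset.mem_univ
          (Finset.univ.filter (fun t => u ∈ I t))) ?_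
        rw [hmemA]
        exact ⟨hu, fun t => by simp⟩
    have hvolA : ∀ w, MeasureTheory.volume (A w) ≠ ⊤ := by
      intro w
      refine ne_top_of_le_ne_top ?_ (MeasureTheory.measure_mono (hAsub w))
      rw [Real.volume_Ico]
      simp
    -- the model
    refine ⟨fun w => (MeasureTheory.volume (A w)).toReal, ⟨⟨?_, ?_, ?_⟩, ?_⟩⟩
    · intro w; exact ENNReal.toReal_nonneg
    · rw [← ENNReal.toReal_sum (fun w _ => hvolA w),
        ← MeasureTheory.measure_biUnion_finset ?_ (fun w _ => hmeasA w), hAcover,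
        Real.volume_Ico]
      · norm_num
      · intro w1 _ w2 _ hne
        exact hAdisj w1 w2 hne
    · intro t
      have hUnion : ⋃ w ∈ Finset.univ.filter (fun w : Finset τ => t ∈ w), A w = I t := by
        apply Set.Subset.antisymm
        · refine Set.iUnion₂_subset fun w hw => ?_
          intro u hu
          rw [hmemA] at hu
          exact (hu.2 t).1 (Finset.mem_filter.1 hw).2
        · intro u hu
          have huIco : u ∈ Set.Ico (0:ℝ) 1 := hIsub t hu
          refine Set.mem_biUnion (Finset.mem_filter.2
            ⟨Finset.mem_univ _, by simp [hu]⟩ :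
            (Finset.univ.filter (fun s => u ∈ I s) : Finset τ) ∈ _) ?_
          rw [hmemA]
          exact ⟨huIco, fun s => by simp⟩
      rw [← ENNReal.toReal_sum (fun w _ => hvolA w),
        ← MeasureTheory.measure_biUnion_finset ?_ (fun w _ => hmeasA w), hUnion, hI,
        Real.volume_Ico, add_sub_cancel_left, ENNReal.toReal_ofReal (hp t).1]
      intro w1 _ w2 _ hne
      exact hAdisj w1 w2 hne
    · rintro w ⟨e, ⟨t1, t2, hne, hx, hz, he⟩, hsub⟩
      have hAempty : A w = ∅ := by
        rw [Set.eq_empty_iff_forall_notMem]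
        intro u hu
        rw [hmemA] at hu
        have h1 : u ∈ I t1 := (hu.2 t1).1 (hsub (he ▸ Finset.mem_insert_self t1 {t2}))
        have h2 : u ∈ I t2 := (hu.2 t2).1 (hsub (he ▸ Finset.mem_insert_of_mem
          (Finset.mem_singleton_self t2)))
        exact Set.disjoint_left.1 (hdisjI t1 t2 hx hz) h1 h2
      show (MeasureTheory.volume (A w)).toReal = 0
      rw [hAempty]
      simp
end

section
/- Let p be a PDB over a finite set T of tuples, let A and B be disjoint subsets of T, let x_A : A → X, x_B : B → X, z_A : A → Z, z_B : B → Z be functions, and let E consist of all 2-element sets {t_1, t_2} with t_1 ∈ A, t_2 ∈ B, x_A(t_1) = x_B(t_2) and z_A(t_1) ≠ z_B(t_2) (the conflict graph of a binary equality-generating dependency over two relations). Then the PDB is consistent w.r.t. E if and only if, for every value v ∈ X and every pair of distinct values c_1, c_2 ∈ Z such that some t_1 ∈ A has x_A(t_1) = v, z_A(t_1) = c_1 and some t_2 ∈ B has x_B(t_2) = v, z_B(t_2) = c_2, it holds that max{ p(t) : t ∈ A, x_A(t) = v, z_A(t) = c_1 } + max{ p(t) : t ∈ B, x_B(t) = v,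 z_B(t) = c_2 } ≤ 1. -/
open Finset

variable {τ : Type*} [Fintype τ] [DecidableEq τ]

/-- If two distinct tuples never co-exist under an interpretation, their probabilities
sum to at most 1. -/
lemma pair_bound {p : τ → ℝ} {Pr : Finset τ → ℝ} (h : IsInterp p Pr)
    {t1 t2 : τ} (h0 : ∀ w : Finset τ, t1 ∈ w → t2 ∈ w → Pr w = 0) :
    p t1 + p t2 ≤ 1 := by
  obtain ⟨hnn, hsum, hmarg⟩ := h
  rw [← hmarg t1, ← hmarg t2, ← Finset.sum_union_inter]
  have h2 : ∑ w ∈ (Finset.univ.filter (fun w => t1 ∈ w)) ∩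
      (Finset.univ.filter (fun w => t2 ∈ w)), Pr w = 0 := by
    apply Finset.sum_eq_zero
    intro w hw
    simp only [Finset.mem_inter, Finset.mem_filter] at hw
    exact h0 w hw.1.2 hw.2.2
  rw [h2, add_zero, ← hsum]
  exact Finset.sum_le_sum_of_subset_of_nonneg (Finset.subset_univ _)
    (fun w _ _ => hnn w)

open MeasureTheory in
/-- for the conflict graph of a binary equality-generating dependency
over two relations `A`, `B` (edges between `t1 ∈ A` and `t2 ∈ B` agreeing on the join
attributes and disagreeing on the constrained attribute), the PDB is consistent iff for
every join value `v` and pair of distinct values `c1 ≠ c2` realized in `A` and `B`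
respectively, the two corresponding maximum probabilities sum to at most 1. -/
theorem consistency_begd
    {X Z : Type*}
    (p : τ → ℝ) (hp : ∀ t, 0 ≤ p t ∧ p t ≤ 1)
    (A B : Finset τ) (hAB : Disjoint A B)
    (xA xB : τ → X) (zA zB : τ → Z) :
    Consistent p
        {e : Finset τ | ∃ t1 ∈ A, ∃ t2 ∈ B,
          xA t1 = xB t2 ∧ zA t1 ≠ zB t2 ∧ e = {t1, t2}} ↔
      ∀ (v : X) (c1 c2 : Z), c1 ≠ c2 →
        (∃ t1 ∈ A, xA t1 = v ∧ zA t1 = c1) →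
        (∃ t2 ∈ B, xB t2 = v ∧ zB t2 = c2) →
        sSup {r : ℝ | ∃ t ∈ A, xA t = v ∧ zA t = c1 ∧ p t = r} +
          sSup {r : ℝ | ∃ t ∈ B, xB t = v ∧ zB t = c2 ∧ p t = r} ≤ 1 := by
  classical
  constructor
  · rintro ⟨Pr, hinterp, hzero⟩ v c1 c2 hc ⟨t1, ht1A, hx1, hz1⟩ ⟨t2, ht2B, hx2, hz2⟩
    set S1 := {r : ℝ | ∃ t ∈ A, xA t = v ∧ zA t = c1 ∧ p t = r} with hS1
    set S2 := {r : ℝ | ∃ t ∈ B, xB t = v ∧ zB t = c2 ∧ p t = r} with hS2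
    have hne1 : S1.Nonempty := ⟨p t1, t1, ht1A, hx1, hz1, rfl⟩
    have hne2 : S2.Nonempty := ⟨p t2, t2, ht2B, hx2, hz2, rfl⟩
    have key : ∀ r1 ∈ S1, ∀ r2 ∈ S2, r1 + r2 ≤ 1 := by
      rintro r1 ⟨s1, hs1A, hsx1, hsz1, rfl⟩ r2 ⟨s2, hs2B, hsx2, hsz2, rfl⟩
      apply pair_bound hinterp
      intro w hw1 hw2
      apply hzero
      refine ⟨{s1, s2}, ⟨s1, hs1A, s2, hs2B, by rw [hsx1, hsx2],
        by rw [hsz1, hsz2]; exact hc, rfl⟩, ?_⟩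
      intro x hx
      rcases Finset.mem_insert.mp hx with h | h
      · exact h ▸ hw1
      · exact (Finset.mem_singleton.mp h) ▸ hw2
    have h1 : sSup S1 ≤ 1 - sSup S2 := by
      apply csSup_le hne1
      intro r1 hr1
      have : sSup S2 ≤ 1 - r1 := by
        apply csSup_le hne2
        intro r2 hr2
        linarith [key r1 hr1 r2 hr2]
      linarith
    linarith
  · intro H
    -- pairwise bound from the sSup hypothesis
    have hpair : ∀ t1 ∈ A, ∀ t2 ∈ B, xA t1 = xB t2 → zA t1 ≠ zB t2 →
        p t1 + p t2 ≤ 1 := by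
      intro t1 h1 t2 h2 hx hz
      have hH := H (xA t1) (zA t1) (zB t2) hz ⟨t1, h1, rfl, rfl⟩ ⟨t2, h2, hx.symm, rfl⟩
      have hbdd1 : BddAbove {r : ℝ | ∃ t ∈ A, xA t = xA t1 ∧ zA t = zA t1 ∧ p t = r} := by
        apply Set.Finite.bddAbove
        apply (Set.finite_range p).subset
        rintro r ⟨t, _, _, _, rfl⟩; exact ⟨t, rfl⟩
      have hbdd2 : BddAbove {r : ℝ | ∃ t ∈ B, xB t = xA t1 ∧ zB t = zB t2 ∧ p t = r} := by
        apply Set.Finite.bddAbove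
        apply (Set.finite_range p).subset
        rintro r ⟨t, _, _, _, rfl⟩; exact ⟨t, rfl⟩
      have hle1 : p t1 ≤ sSup {r : ℝ | ∃ t ∈ A, xA t = xA t1 ∧ zA t = zA t1 ∧ p t = r} :=
        le_csSup hbdd1 ⟨t1, h1, rfl, rfl, rfl⟩
      have hle2 : p t2 ≤ sSup {r : ℝ | ∃ t ∈ B, xB t = xA t1 ∧ zB t = zB t2 ∧ p t = r} :=
        le_csSup hbdd2 ⟨t2, h2, hx.symm, rfl, rfl⟩
      linarith
    -- construct the model from a uniform variable on [0,1)
    set W : ℝ → Finset τ :=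
      fun u => Finset.univ.filter (fun t => if t ∈ B then 1 - p t ≤ u else u < p t) with hWdef
    have hmemW : ∀ u t, t ∈ W u ↔ (if t ∈ B then 1 - p t ≤ u else u < p t) := by
      intro u t; simp [hWdef]
    set M : τ → Set ℝ := fun t => if t ∈ B then Set.Ici (1 - p t) else Set.Iio (p t) with hMdef
    have hMmem : ∀ t u, u ∈ M t ↔ t ∈ W u := by
      intro t u; by_cases h : t ∈ B <;> simp [hMdef, hmemW, h]
    have hMmeas : ∀ t, MeasurableSet (M t) := by
      intro t; by_cases h : t ∈ B <;> simp [hMdef, h]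
    have hpremeas : ∀ w : Finset τ, MeasurableSet (W ⁻¹' {w}) := by
      intro w
      have heq : W ⁻¹' {w} = ⋂ t : τ, {u | t ∈ W u ↔ t ∈ w} := by
        ext u
        simp only [Set.mem_preimage, Set.mem_singleton_iff, Set.mem_iInter,
          Set.mem_setOf_eq, Finset.ext_iff]
      rw [heq]
      apply MeasurableSet.iInter
      intro t
      by_cases hw : t ∈ w
      · have : {u | t ∈ W u ↔ t ∈ w} = M t := by ext u; simp [hMmem, hw]
        rw [this]; exact hMmeas t
      · have : {u | t ∈ W u ↔ t ∈ w} = (M t)ᶜ := by ext u; simp [hMmem, hw]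
        rw [this]; exact (hMmeas t).compl
    set μ := volume.restrict (Set.Ico (0:ℝ) 1) with hμdef
    have hμuniv : μ Set.univ = 1 := by
      rw [hμdef, Measure.restrict_apply_univ, Real.volume_Ico]
      norm_num
    have hfin : ∀ s : Set ℝ, μ s ≠ ⊤ := by
      intro s
      have : μ s ≤ μ Set.univ := measure_mono (Set.subset_univ s)
      rw [hμuniv] at this
      exact ne_top_of_le_ne_top ENNReal.one_ne_top this
    refine ⟨fun w => (μ (W ⁻¹' {w})).toReal, ⟨⟨?_, ?_, ?_⟩, ?_⟩⟩
    · intro w; exact ENNReal.toReal_nonneg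
    · rw [← ENNReal.toReal_sum (fun w _ => hfin _)]
      rw [MeasureTheory.sum_measure_preimage_singleton Finset.univ
        (fun w _ => hpremeas w)]
      rw [Finset.coe_univ, Set.preimage_univ, hμuniv]
      simp
    · intro t
      rw [← ENNReal.toReal_sum (fun w _ => hfin _)]
      rw [MeasureTheory.sum_measure_preimage_singleton _
        (fun w _ => hpremeas w)]
      have hpre : W ⁻¹' ((Finset.univ.filter (fun w : Finset τ => t ∈ w)) : Set (Finset τ)) = M t := by
        ext u
        simp [Set.mem_preimage, hMmem]
      rw [hpre, hμdef, Measure.restrict_apply (hMmeas t)]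
      by_cases hB : t ∈ B
      · have h1 : M t ∩ Set.Ico (0:ℝ) 1 = Set.Ico (1 - p t) 1 := by
          simp only [hMdef, if_pos hB]
          ext u
          simp only [Set.mem_inter_iff, Set.mem_Ici, Set.mem_Ico]
          constructor
          · rintro ⟨h1, _, h3⟩; exact ⟨h1, h3⟩
          · rintro ⟨h1, h2⟩; exact ⟨h1, by linarith [(hp t).2], h2⟩
        rw [h1, Real.volume_Ico]
        rw [show (1:ℝ) - (1 - p t) = p t by ring]
        exact ENNReal.toReal_ofReal (hp t).1
      · have h1 : M t ∩ Set.Ico (0:ℝ) 1 = Set.Ico 0 (p t) := by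
          simp only [hMdef, if_neg hB]
          ext u
          simp only [Set.mem_inter_iff, Set.mem_Iio, Set.mem_Ico]
          constructor
          · rintro ⟨h1, h2, _⟩; exact ⟨h2, h1⟩
          · rintro ⟨h1, h2⟩; exact ⟨h2, h1, by linarith [(hp t).2]⟩
        rw [h1, Real.volume_Ico, sub_zero]
        exact ENNReal.toReal_ofReal (hp t).1
    · rintro w ⟨e, ⟨t1, h1, t2, h2, hx, hz, rfl⟩, hsub⟩
      have hw1 : t1 ∈ w := hsub (Finset.mem_insert_self _ _)
      have hw2 : t2 ∈ w := hsub (Finset.mem_insert.mpr (Or.inr (Finset.mem_singleton_self _)))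
      have hempty : W ⁻¹' {w} = ∅ := by
        ext u
        simp only [Set.mem_preimage, Set.mem_singleton_iff, Set.mem_empty_iff_false,
          iff_false]
        intro hWu
        have ht1 : t1 ∈ W u := hWu ▸ hw1
        have ht2 : t2 ∈ W u := hWu ▸ hw2
        have h1B : t1 ∉ B := Finset.disjoint_left.mp hAB h1
        rw [hmemW, if_neg h1B] at ht1
        rw [hmemW, if_pos h2] at ht2
        have := hpair t1 h1 t2 h2 hx hz
        linarith
      show (μ (W ⁻¹' {w})).toReal = 0
      rw [hempty]
      simp
end

section
/- Let p be a PDB over a finite set T = {u_0, u_1, …, u_k} of distinct tuples with k ≥ 2, and let the conflict hypergraph be the path graph E = { {u_i, u_{i+1}} : 0 ≤ i ≤ k−1 }. Assume the PDB is consistent w.r.t. E. Then p^max({u_0, u_k}) = min{ p(u_0), p(u_k), 1 − (p(u_1) + p(u_{k−1}) − p^max({u_1, u_{k−1}})) }. -/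
open Finset

variable {τ : Type*} [Fintype τ] [DecidableEq τ]

/-!
The tuple `a = u₀` conflicts only with `c = u₁`, and `b = u_k` only with `d = u_{k-1}`. In a
world containing both `a` and `b` neither `c` nor `d` occurs, so besides `p a` and `p b` the
probability of `{a, b}` is bounded by the mass `1 - (p c + p d - Pr {c, d})` of the worlds avoiding
`c` and `d`, and this mass is largest for a model attaining `p^max {c, d}`.

Conversely, start from such a model, forget `a` and then re-insert it at random, with a probability
that depends only on which of `c`, `d` occur (and is `0` when `c` occurs); then do the same for `b`,
now also looking at `a`. These resamplings keep all other marginals and all conflicts, and the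
conditional probabilities can be tuned so that `a` and `b` share a mass
`min (p a) (min (p b) A)` inside the worlds avoiding `c` and `d`, whose total mass is `A`.
-/

omit [DecidableEq τ] in
theorem sum_filter_eq_sum_mul_boole (Pr : Finset τ → ℝ) (P : Finset τ → Prop)
    [DecidablePred P] :
    ∑ w ∈ univ.filter P, Pr w = ∑ w, Pr w * if P w then 1 else 0 := by
  simp_rw [mul_boole, sum_filter]

theorem coexistProb_eq_sum_mul_boole (Pr : Finset τ → ℝ) (S : Finset τ) :
    coexistProb Pr S = ∑ w, Pr w * if S ⊆ w then 1 else 0 :=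
  sum_filter_eq_sum_mul_boole Pr _

theorem IsInterp.nonneg {p : τ → ℝ} {Pr : Finset τ → ℝ} (hPr : IsInterp p Pr) (t : τ) :
    0 ≤ p t :=
  hPr.2.2 t ▸ sum_nonneg fun w _ => hPr.1 w

theorem IsInterp.sum_mul_boole_mem {p : τ → ℝ} {Pr : Finset τ → ℝ} (hPr : IsInterp p Pr)
    (t : τ) : ∑ w, Pr w * (if t ∈ w then 1 else 0) = p t := by
  rw [← sum_filter_eq_sum_mul_boole, hPr.2.2 t]

theorem IsInterp.coexistProb_le {p : τ → ℝ} {Pr : Finset τ → ℝ} (hPr : IsInterp p Pr)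
    {S : Finset τ} {t : τ} (ht : t ∈ S) : coexistProb Pr S ≤ p t := by
  rw [← hPr.2.2 t]
  refine sum_le_sum_of_subset_of_nonneg (fun w hw => ?_) fun w _ _ => hPr.1 w
  simp only [mem_filter] at hw ⊢
  exact ⟨hw.1, hw.2 ht⟩

theorem IsInterp.sum_mul_ite_mem_ite_mem {p : τ → ℝ} {Pr : Finset τ → ℝ} (hPr : IsInterp p Pr)
    (c d : τ) (x₁₁ x₁₀ x₀₁ x₀₀ : ℝ) :
    ∑ w, Pr w * (if c ∈ w then (if d ∈ w then x₁₁ else x₁₀) else (if d ∈ w then x₀₁ else x₀₀)) =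
      coexistProb Pr {c, d} * x₁₁ + (p c - coexistProb Pr {c, d}) * x₁₀ +
        (p d - coexistProb Pr {c, d}) * x₀₁ + (1 - p c - p d + coexistProb Pr {c, d}) * x₀₀ := by
  have hsplit : ∀ w, Pr w *
      (if c ∈ w then (if d ∈ w then x₁₁ else x₁₀) else (if d ∈ w then x₀₁ else x₀₀)) =
      Pr w * x₀₀ + Pr w * (if c ∈ w then 1 else 0) * (x₁₀ - x₀₀) +
        Pr w * (if d ∈ w then 1 else 0) * (x₀₁ - x₀₀) +
        Pr w * (if {c, d} ⊆ w then 1 else 0) * (x₁₁ - x₁₀ - x₀₁ + x₀₀) := by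
    intro w
    by_cases hc : c ∈ w <;> by_cases hd : d ∈ w <;>
      simp only [hc, hd, ↓reduceIte, insert_subset_iff, singleton_subset_iff, and_self, and_true,
        and_false] <;> ring
  simp only [hsplit, sum_add_distrib, ← sum_mul, hPr.sum_mul_boole_mem,
    ← coexistProb_eq_sum_mul_boole, hPr.2.1]
  ring

theorem IsInterp.add_sub_coexistProb_le_one {p : τ → ℝ} {Pr : Finset τ → ℝ}
    (hPr : IsInterp p Pr) (c d : τ) : p c + p d - coexistProb Pr {c, d} ≤ 1 := by
  have hsum := hPr.sum_mul_ite_mem_ite_mem c d 0 0 0 1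
  have hnn : 0 ≤ ∑ w, Pr w *
      (if c ∈ w then (if d ∈ w then (0 : ℝ) else 0) else (if d ∈ w then 0 else 1)) :=
    sum_nonneg fun w _ => mul_nonneg (hPr.1 w) (by split_ifs <;> norm_num)
  linarith

theorem IsModel.sum_mul_le_one {p : τ → ℝ} {E : Set (Finset τ)} {Pr : Finset τ → ℝ}
    (hPr : IsModel p E Pr) {h : Finset τ → ℝ} (hh : ∀ w, (∀ e ∈ E, ¬e ⊆ w) → h w ≤ 1) :
    ∑ w, Pr w * h w ≤ 1 := by
  refine (sum_le_sum fun w _ => ?_).trans_eq hPr.1.2.1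
  by_cases hw : ∀ e ∈ E, ¬e ⊆ w
  · exact mul_le_of_le_one_right (hPr.1.1 w) (hh w hw)
  · push Not at hw
    simp [hPr.2 w hw]

theorem IsModel.add_le_one {p : τ → ℝ} {E : Set (Finset τ)} {Pr : Finset τ → ℝ}
    (hPr : IsModel p E Pr) {a c : τ} (hacE : {a, c} ∈ E) : p a + p c ≤ 1 := by
  rw [← hPr.1.sum_mul_boole_mem a, ← hPr.1.sum_mul_boole_mem c, ← sum_add_distrib]
  simp_rw [← mul_add]
  refine hPr.sum_mul_le_one fun w hw => ?_
  have hac : a ∈ w → c ∉ w := fun ha hc => hw _ hacE (by simp [insert_subset_iff, ha, hc])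
  by_cases ha : a ∈ w <;> by_cases hc : c ∈ w <;> simp [ha, hc] at hac ⊢

theorem IsModel.coexistProb_le_one_sub {p : τ → ℝ} {E : Set (Finset τ)} {Pr : Finset τ → ℝ}
    (hPr : IsModel p E Pr) {a b c d : τ} (hacE : {a, c} ∈ E) (hbdE : {b, d} ∈ E) :
    coexistProb Pr {a, b} ≤ 1 - (p c + p d - coexistProb Pr {c, d}) := by
  suffices ∑ w, Pr w * ((if {a, b} ⊆ w then 1 else 0) + (if c ∈ w then 1 else 0) +
      (if d ∈ w then 1 else 0) - (if {c, d} ⊆ w then 1 else 0)) ≤ 1 by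
    simp only [mul_sub, mul_add, sum_sub_distrib, sum_add_distrib, hPr.1.sum_mul_boole_mem,
      ← coexistProb_eq_sum_mul_boole] at this
    linarith
  refine hPr.sum_mul_le_one fun w hw => ?_
  have hac : a ∈ w → c ∉ w := fun ha hc => hw _ hacE (by simp [insert_subset_iff, ha, hc])
  have hbd : b ∈ w → d ∉ w := fun hb hd => hw _ hbdE (by simp [insert_subset_iff, hb, hd])
  by_cases ha : a ∈ w <;> by_cases hb : b ∈ w <;> by_cases hc : c ∈ w <;> by_cases hd : d ∈ w <;>
    simp [insert_subset_iff, ha, hb, hc, hd] at hac hbd ⊢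

theorem sum_eq_sum_powerset_erase {β : Type*} [AddCommMonoid β] (a : τ) (F : Finset τ → β) :
    ∑ w, F w = ∑ t ∈ (univ.erase a).powerset, (F t + F (insert a t)) := by
  rw [sum_add_distrib, ← sum_powerset_insert (notMem_erase a univ), insert_erase (mem_univ a),
    powerset_univ]

/-- Forget whether `a` is present, then re-insert it with probability `f v`, where `v` is the rest
of the world. -/
def resample (Pr : Finset τ → ℝ) (a : τ) (f : Finset τ → ℝ) (w : Finset τ) : ℝ :=
  (if a ∈ w then f (w.erase a) else 1 - f (w.erase a)) * (Pr (w.erase a) + Pr (insert a w))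

theorem sum_resample_mul (Pr : Finset τ → ℝ) (a : τ) (f h : Finset τ → ℝ) :
    ∑ w, resample Pr a f w * h w =
      ∑ w, Pr w * ((1 - f (w.erase a)) * h (w.erase a) + f (w.erase a) * h (insert a w)) := by
  rw [sum_eq_sum_powerset_erase a, sum_eq_sum_powerset_erase a]
  refine sum_congr rfl fun t ht => ?_
  have hat : a ∉ t := fun h => (mem_powerset.1 ht h |> mem_erase.1).1 rfl
  simp only [resample, erase_eq_of_notMem hat, erase_insert hat, insert_idem, mem_insert_self,
    if_pos, if_neg hat]
  ring

theorem coexistProb_resample_pair (Pr f : Finset τ → ℝ) {a b : τ} (hab : a ≠ b) :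
    coexistProb (resample Pr b f) {a, b} =
      ∑ w, Pr w * (f (w.erase b) * if a ∈ w then 1 else 0) := by
  rw [coexistProb_eq_sum_mul_boole, sum_resample_mul]
  refine sum_congr rfl fun w _ => ?_
  simp [insert_subset_iff, hab]

theorem IsModel.resample {p : τ → ℝ} {E : Set (Finset τ)} {Pr : Finset τ → ℝ}
    (hPr : IsModel p E Pr) {a : τ} {f : Finset τ → ℝ} (hf : ∀ v, f v ∈ Set.Icc (0 : ℝ) 1)
    (hfE : ∀ e ∈ E, a ∈ e → ∀ v, e.erase a ⊆ v → f v = 0)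
    (hfa : ∑ w, Pr w * f (w.erase a) = p a) :
    IsModel p E (resample Pr a f) := by
  obtain ⟨⟨hnn, htot, hmarg⟩, hE⟩ := hPr
  refine ⟨⟨fun w => ?_, ?_, fun t => ?_⟩, ?_⟩
  · unfold _root_.resample
    have := hf (w.erase a)
    exact mul_nonneg (by split_ifs <;> linarith [this.1, this.2]) (add_nonneg (hnn _) (hnn _))
  · simpa [htot] using sum_resample_mul Pr a f 1
  · rw [sum_filter_eq_sum_mul_boole, sum_resample_mul]
    by_cases hta : t = a
    · subst hta
      simpa using hfa
    · simp only [mem_erase, mem_insert, hta, Ne, not_false_eq_true, true_and, false_or]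
      rw [← hmarg t, sum_filter_eq_sum_mul_boole]
      exact sum_congr rfl fun w _ => by ring
  · rintro w ⟨e, he, hew⟩
    unfold _root_.resample
    by_cases hae : a ∈ e
    · rw [if_pos (hew hae), hfE e he hae _ (erase_subset_erase a hew), zero_mul]
    · rw [hE _ ⟨e, he, subset_erase.2 ⟨hew, hae⟩⟩, hE _ ⟨e, he, hew.trans (subset_insert a w)⟩]
      ring

theorem exists_mem_Icc_mul_eq {x y : ℝ} (hx : 0 ≤ x) (hxy : x ≤ y) :
    ∃ r ∈ Set.Icc (0 : ℝ) 1, r * y = x := by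
  rcases (hx.trans hxy).eq_or_lt with rfl | hy
  · exact ⟨0, Set.left_mem_Icc.2 zero_le_one, by linarith⟩
  · exact ⟨x / y, ⟨div_nonneg hx hy.le, (div_le_one hy).2 hxy⟩, div_mul_cancel₀ x hy.ne'⟩

/- `D₀₁`, `D₁₀`, `A` are the masses of the worlds containing only `d`, only `c`, and neither.
`a` puts `min pa A` of its mass on the last class and the rest on the first; `b` likewise with the
second, and inside the last class the two overlap as much as possible. -/
theorem exists_resampling_params {pa pb D₀₁ D₁₀ A : ℝ} (hpa : 0 ≤ pa) (hpb : 0 ≤ pb)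
    (hD₀₁ : 0 ≤ D₀₁) (hD₁₀ : 0 ≤ D₁₀) (hA : 0 ≤ A) (hpaA : pa ≤ A + D₀₁) (hpbA : pb ≤ A + D₁₀) :
    ∃ s₀₁ ∈ Set.Icc (0 : ℝ) 1, ∃ s₀₀ ∈ Set.Icc (0 : ℝ) 1,
      ∃ t₁₀ ∈ Set.Icc (0 : ℝ) 1, ∃ t₁ ∈ Set.Icc (0 : ℝ) 1, ∃ t₀ ∈ Set.Icc (0 : ℝ) 1,
        D₀₁ * s₀₁ + A * s₀₀ = pa ∧ D₁₀ * t₁₀ + A * ((1 - s₀₀) * t₀ + s₀₀ * t₁) = pb ∧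
          A * (s₀₀ * t₁) = min pa (min pb A) := by
  set ma := min pa A
  set mb := min pb A
  have hma := min_cases pa A
  have hmb := min_cases pb A
  have hm := min_cases ma mb
  obtain ⟨s₀₀, hs₀₀, hs₀₀A⟩ := exists_mem_Icc_mul_eq (x := ma) (y := A) (by grind) (by grind)
  obtain ⟨s₀₁, hs₀₁, hs₀₁D⟩ :=
    exists_mem_Icc_mul_eq (x := pa - ma) (y := D₀₁) (by grind) (by grind)
  obtain ⟨t₁₀, ht₁₀, ht₁₀D⟩ :=
    exists_mem_Icc_mul_eq (x := pb - mb) (y := D₁₀) (by grind) (by grind)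
  obtain ⟨t₁, ht₁, ht₁m⟩ :=
    exists_mem_Icc_mul_eq (x := min ma mb) (y := ma) (by grind) (by grind)
  obtain ⟨t₀, ht₀, ht₀m⟩ :=
    exists_mem_Icc_mul_eq (x := mb - min ma mb) (y := A - ma) (by grind) (by grind)
  refine ⟨s₀₁, hs₀₁, s₀₀, hs₀₀, t₁₀, ht₁₀, t₁, ht₁, t₀, ht₀, ?_, ?_, ?_⟩
  · linear_combination hs₀₁D + hs₀₀A
  · linear_combination ht₁₀D + ht₁m + ht₀m + (t₁ - t₀) * hs₀₀A
  · rw [show min pa (min pb A) = min ma mb by grind, ← ht₁m, ← hs₀₀A]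
    ring

theorem exists_model_coexistProb_eq_min {p : τ → ℝ} {E : Set (Finset τ)} {Pr : Finset τ → ℝ}
    (hPr : IsModel p E Pr) {a b c d : τ}
    (hab : a ≠ b) (hac : a ≠ c) (had : a ≠ d) (hbc : b ≠ c) (hbd : b ≠ d)
    (hacE : {a, c} ∈ E) (hbdE : {b, d} ∈ E)
    (hEa : ∀ e ∈ E, a ∈ e → c ∈ e) (hEb : ∀ e ∈ E, b ∈ e → d ∈ e) :
    ∃ Pr', IsModel p E Pr' ∧ coexistProb Pr' {a, b} =
      min (p a) (min (p b) (1 - (p c + p d - coexistProb Pr {c, d}))) := by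
  have hclass := hPr.1.sum_mul_ite_mem_ite_mem c d
  set q := coexistProb Pr {c, d}
  have hqc : q ≤ p c := hPr.1.coexistProb_le (mem_insert_self c _)
  have hqd : q ≤ p d := hPr.1.coexistProb_le (mem_insert_of_mem (mem_singleton_self d))
  have hA := hPr.1.add_sub_coexistProb_le_one c d
  have hac1 := hPr.add_le_one hacE
  have hbd1 := hPr.add_le_one hbdE
  obtain ⟨s₀₁, hs₀₁, s₀₀, hs₀₀, t₁₀, ht₁₀, t₁, ht₁, t₀, ht₀, hpa, hpb, hm⟩ :=
    exists_resampling_params (hPr.1.nonneg a) (hPr.1.nonneg b) (D₀₁ := p d - q) (D₁₀ := p c - q)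
      (A := 1 - (p c + p d - q)) (by linarith) (by linarith) (by linarith) (by linarith)
      (by linarith)
  have h0 : (0 : ℝ) ∈ Set.Icc (0 : ℝ) 1 := Set.left_mem_Icc.2 zero_le_one
  set fa : Finset τ → ℝ := fun v => if c ∈ v then 0 else if d ∈ v then s₀₁ else s₀₀
  set fb : Finset τ → ℝ := fun v =>
    if d ∈ v then 0 else if c ∈ v then t₁₀ else if a ∈ v then t₁ else t₀
  have hPra : IsModel p E (resample Pr a fa) := by
    refine hPr.resample (fun v => by dsimp only [fa]; split_ifs <;> assumption)
      (fun e he hae v hv => if_pos (hv (mem_erase.2 ⟨hac.symm, hEa e he hae⟩))) ?_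
    have := hclass 0 0 s₀₁ s₀₀
    simp only [ite_self] at this
    simp only [fa, mem_erase, ne_eq, hac.symm, had.symm, not_false_eq_true, true_and, this]
    linarith
  have hPrb : IsModel p E (resample (resample Pr a fa) b fb) := by
    refine hPra.resample (fun v => by dsimp only [fb]; split_ifs <;> assumption)
      (fun e he hbe v hv => if_pos (hv (mem_erase.2 ⟨hbd.symm, hEb e he hbe⟩))) ?_
    rw [sum_resample_mul, ← hpb]
    calc _ = ∑ w, Pr w * (if c ∈ w then (if d ∈ w then 0 else t₁₀)
            else (if d ∈ w then 0 else (1 - s₀₀) * t₀ + s₀₀ * t₁)) := by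
          refine sum_congr rfl fun w _ => congrArg _ ?_
          by_cases hc : c ∈ w <;> by_cases hd : d ∈ w <;>
            simp [fa, fb, hc, hd, hab, hac.symm, had.symm, hbc.symm, hbd.symm]
      _ = _ := by rw [hclass]; ring
  refine ⟨_, hPrb, ?_⟩
  rw [coexistProb_resample_pair _ _ hab, sum_resample_mul, ← hm]
  calc _ = ∑ w, Pr w * (if c ∈ w then (if d ∈ w then 0 else 0)
          else (if d ∈ w then 0 else s₀₀ * t₁)) := by
        refine sum_congr rfl fun w _ => congrArg _ ?_
        by_cases hc : c ∈ w <;> by_cases hd : d ∈ w <;>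
          simp [fa, fb, hc, hd, hab, hac.symm, had.symm, hbc.symm, hbd.symm]
    _ = _ := by rw [hclass]; ring

theorem isGreatest_coexistProb_of_pendant {p : τ → ℝ} {E : Set (Finset τ)} {a b c d : τ}
    (hab : a ≠ b) (hac : a ≠ c) (had : a ≠ d) (hbc : b ≠ c) (hbd : b ≠ d)
    (hacE : {a, c} ∈ E) (hbdE : {b, d} ∈ E)
    (hEa : ∀ e ∈ E, a ∈ e → c ∈ e) (hEb : ∀ e ∈ E, b ∈ e → d ∈ e) {q : ℝ}
    (hq : IsGreatest {x | ∃ Pr, IsModel p E Pr ∧ coexistProb Pr {c, d} = x} q) :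
    IsGreatest {x | ∃ Pr, IsModel p E Pr ∧ coexistProb Pr {a, b} = x}
      (min (p a) (min (p b) (1 - (p c + p d - q)))) := by
  obtain ⟨Pr, hPr, rfl⟩ := hq.1
  refine ⟨exists_model_coexistProb_eq_min hPr hab hac had hbc hbd hacE hbdE hEa hEb, ?_⟩
  rintro _ ⟨Pr', hPr', rfl⟩
  have hcd : coexistProb Pr' {c, d} ≤ coexistProb Pr {c, d} := hq.2 ⟨Pr', hPr', rfl⟩
  refine le_min (hPr'.1.coexistProb_le (mem_insert_self a _))
    (le_min (hPr'.1.coexistProb_le (mem_insert_of_mem (mem_singleton_self b))) ?_)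
  linarith [hPr'.coexistProb_le_one_sub hacE hbdE]

omit [Fintype τ] in
def pathEdges {k : ℕ} (u : Fin (k + 1) → τ) : Set (Finset τ) :=
  {s | ∃ i : Fin k, s = {u i.castSucc, u i.succ}}

omit [Fintype τ] in
theorem pair_mem_pathEdges {k : ℕ} (u : Fin (k + 1) → τ) {i j : ℕ} (hi : i < k)
    (hij : j = i + 1) :
    {u ⟨i, by omega⟩, u ⟨j, by omega⟩} ∈ pathEdges u := by
  subst hij
  exact ⟨⟨i, hi⟩, rfl⟩

omit [Fintype τ] in
theorem mem_of_first_mem_pathEdges {k : ℕ} {u : Fin (k + 1) → τ} (hu : Function.Injective u)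
    (hk : 1 ≤ k) :
    ∀ e ∈ pathEdges u, u ⟨0, k.succ_pos⟩ ∈ e → u ⟨1, Nat.lt_succ_of_le hk⟩ ∈ e := by
  rintro _ ⟨j, rfl⟩ h
  simp only [mem_insert, mem_singleton, hu.eq_iff, Fin.ext_iff, Fin.val_castSucc,
    Fin.val_succ] at h ⊢
  omega

omit [Fintype τ] in
theorem mem_of_last_mem_pathEdges {k : ℕ} {u : Fin (k + 1) → τ} (hu : Function.Injective u)
    (hk : 1 ≤ k) :
    ∀ e ∈ pathEdges u, u ⟨k, k.lt_succ_self⟩ ∈ e →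
      u ⟨k - 1, Nat.lt_succ_of_le (k.sub_le 1)⟩ ∈ e := by
  rintro _ ⟨j, rfl⟩ h
  simp only [mem_insert, mem_singleton, hu.eq_iff, Fin.ext_iff, Fin.val_castSucc,
    Fin.val_succ] at h ⊢
  omega

/-- for the path conflict graph on tuples `u_0, …, u_k` (`k ≥ 2`),
`p^max({u_0, u_k}) = min {p(u_0), p(u_k), 1 − (p(u_1) + p(u_{k−1}) − p^max({u_1, u_{k−1}}))}`. -/
theorem pmax_path_graph
    (p : τ → ℝ)
    (k : ℕ) (hk : 2 ≤ k) (u : Fin (k + 1) → τ)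
    (hbij : Function.Bijective u)
    (q : ℝ)
    (hq : IsGreatest {x : ℝ | ∃ Pr,
        IsModel p {s : Finset τ | ∃ i : Fin k, s = {u i.castSucc, u i.succ}} Pr ∧
        coexistProb Pr {u ⟨1, by omega⟩, u ⟨k - 1, by omega⟩} = x} q) :
    IsGreatest {x : ℝ | ∃ Pr,
        IsModel p {s : Finset τ | ∃ i : Fin k, s = {u i.castSucc, u i.succ}} Pr ∧
        coexistProb Pr {u ⟨0, by omega⟩, u ⟨k, by omega⟩} = x}
      (min (p (u ⟨0, by omega⟩)) (min (p (u ⟨k, by omega⟩))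
        (1 - (p (u ⟨1, by omega⟩) + p (u ⟨k - 1, by omega⟩) - q)))) := by
  have hne : ∀ {i j : ℕ} (hi : i < k + 1) (hj : j < k + 1), i ≠ j → u ⟨i, hi⟩ ≠ u ⟨j, hj⟩ :=
    fun _ _ h => hbij.injective.ne (Fin.ne_of_val_ne h)
  have hbdE : {u ⟨k, by omega⟩, u ⟨k - 1, by omega⟩} ∈ pathEdges u := by
    rw [pair_comm]
    exact pair_mem_pathEdges u (by omega) (by omega)
  exact isGreatest_coexistProb_of_pendant (hne _ _ (by omega)) (hne _ _ (by omega))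
    (hne _ _ (by omega)) (hne _ _ (by omega)) (hne _ _ (by omega))
    (pair_mem_pathEdges u (by omega) rfl) hbdE
    (mem_of_first_mem_pathEdges hbij.injective (by omega))
    (mem_of_last_mem_pathEdges hbij.injective (by omega)) hq
end

section
/- Let p be a PDB over a finite set T of tuples and let E = E_1 ∪ E_2 be a set of hyperedges over T such that no tuple belongs both to a hyperedge of E_1 and to a hyperedge of E_2 (the node sets of E_1 and E_2 are disjoint). Then the PDB is consistent w.r.t. E if and only if it is consistent w.r.t. E_1 and consistent w.r.t. E_2. -/
open Finset

variable {τ : Type*} [Fintype τ] [DecidableEq τ]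

/-- if no tuple belongs both to a hyperedge of `E1` and to a hyperedge of
`E2`, then the PDB is consistent w.r.t. `E1 ∪ E2` iff it is consistent w.r.t. `E1` and
consistent w.r.t. `E2`. -/
theorem consistency_disjoint_components
    (p : τ → ℝ) (hp : ∀ t, 0 ≤ p t ∧ p t ≤ 1)
    (E1 E2 : Set (Finset τ))
    (hedges1 : ∀ e ∈ E1, e.Nonempty) (hedges2 : ∀ e ∈ E2, e.Nonempty)
    (hdisj : ∀ t : τ, ¬ ((∃ e ∈ E1, t ∈ e) ∧ (∃ e ∈ E2, t ∈ e))) :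
    Consistent p (E1 ∪ E2) ↔ (Consistent p E1 ∧ Consistent p E2) := by
  classical
  constructor
  · rintro ⟨Pr, hI, hz⟩
    exact ⟨⟨Pr, hI, fun w ⟨e, he, hsub⟩ => hz w ⟨e, Or.inl he, hsub⟩⟩,
           ⟨Pr, hI, fun w ⟨e, he, hsub⟩ => hz w ⟨e, Or.inr he, hsub⟩⟩⟩
  · rintro ⟨⟨P1, ⟨h1pos, h1sum, h1marg⟩, h1z⟩, ⟨P2, ⟨h2pos, h2sum, h2marg⟩, h2z⟩⟩
    set V1 : Finset τ := Finset.univ.filter (fun t => ∃ e ∈ E1, t ∈ e) with hV1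
    have hV1mem : ∀ t, t ∈ V1 ↔ ∃ e ∈ E1, t ∈ e := by
      intro t; simp [hV1]
    set comb : Finset τ → Finset τ → Finset τ := fun w1 w2 => (w1 ∩ V1) ∪ (w2 \ V1)
      with hcomb
    refine ⟨fun w => ∑ q : Finset τ × Finset τ,
        if comb q.1 q.2 = w then P1 q.1 * P2 q.2 else 0, ⟨⟨?_, ?_, ?_⟩, ?_⟩⟩
    · intro w
      refine Finset.sum_nonneg fun q _ => ?_
      split
      · exact mul_nonneg (h1pos q.1) (h2pos q.2)
      · exact le_refl _
    · rw [Finset.sum_comm]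
      have : ∀ q : Finset τ × Finset τ,
          (∑ w : Finset τ, if comb q.1 q.2 = w then P1 q.1 * P2 q.2 else 0)
            = P1 q.1 * P2 q.2 := by
        intro q; simp
      rw [Finset.sum_congr rfl fun q _ => this q]
      rw [Fintype.sum_prod_type]
      simp only [← Finset.sum_mul, h1sum, ← Finset.mul_sum]
      rw [h2sum, one_mul]
    · intro t
      rw [Finset.sum_comm]
      have key : ∀ q : Finset τ × Finset τ,
          (∑ w ∈ Finset.univ.filter (fun w => t ∈ w), if comb q.1 q.2 = w then P1 q.1 * P2 q.2 else 0)
            = if t ∈ comb q.1 q.2 then P1 q.1 * P2 q.2 else 0 := by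
        intro q
        rw [Finset.sum_ite_eq (Finset.univ.filter (fun w => t ∈ w)) (comb q.1 q.2)
          (fun _ => P1 q.1 * P2 q.2)]
        simp
      rw [Finset.sum_congr rfl fun q _ => key q]
      by_cases ht : t ∈ V1
      · have hmem : ∀ q : Finset τ × Finset τ, t ∈ comb q.1 q.2 ↔ t ∈ q.1 := by
          intro q
          simp only [hcomb, Finset.mem_union, Finset.mem_inter, Finset.mem_sdiff]
          tauto
        calc ∑ q : Finset τ × Finset τ, (if t ∈ comb q.1 q.2 then P1 q.1 * P2 q.2 else 0)
            = ∑ q : Finset τ × Finset τ, (if t ∈ q.1 then P1 q.1 else 0) * P2 q.2 := by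
              refine Finset.sum_congr rfl fun q _ => ?_
              simp only [hmem q]; split <;> simp
          _ = (∑ a : Finset τ, if t ∈ a then P1 a else 0) * ∑ b : Finset τ, P2 b := by
              rw [Fintype.sum_prod_type, Finset.sum_mul]
              exact Finset.sum_congr rfl fun a _ => by rw [Finset.mul_sum]
          _ = p t := by rw [h2sum, mul_one, ← Finset.sum_filter, h1marg]
      · have hmem : ∀ q : Finset τ × Finset τ, t ∈ comb q.1 q.2 ↔ t ∈ q.2 := by
          intro q
          simp only [hcomb, Finset.mem_union, Finset.mem_inter, Finset.mem_sdiff]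
          tauto
        calc ∑ q : Finset τ × Finset τ, (if t ∈ comb q.1 q.2 then P1 q.1 * P2 q.2 else 0)
            = ∑ q : Finset τ × Finset τ, P1 q.1 * (if t ∈ q.2 then P2 q.2 else 0) := by
              refine Finset.sum_congr rfl fun q _ => ?_
              simp only [hmem q]; split <;> simp
          _ = (∑ a : Finset τ, P1 a) * ∑ b : Finset τ, (if t ∈ b then P2 b else 0) := by
              rw [Fintype.sum_prod_type, Finset.sum_mul]
              exact Finset.sum_congr rfl fun a _ => by rw [Finset.mul_sum]
          _ = p t := by rw [h1sum, one_mul, ← Finset.sum_filter, h2marg]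
    · rintro w ⟨e, he, hsub⟩
      refine Finset.sum_eq_zero fun q _ => ?_
      split
      case isTrue hq =>
        rcases he with he | he
        · have heV1 : e ⊆ q.1 := by
            intro t htE
            have htV : t ∈ V1 := (hV1mem t).2 ⟨e, he, htE⟩
            have : t ∈ comb q.1 q.2 := hq ▸ hsub htE
            simp only [hcomb, Finset.mem_union, Finset.mem_inter, Finset.mem_sdiff] at this
            tauto
          rw [h1z q.1 ⟨e, he, heV1⟩, zero_mul]
        · have heV2 : e ⊆ q.2 := by
            intro t htE
            have htV : t ∉ V1 := by
              intro hV
              exact hdisj t ⟨(hV1mem t).1 hV, ⟨e, he, htE⟩⟩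
            have : t ∈ comb q.1 q.2 := hq ▸ hsub htE
            simp only [hcomb, Finset.mem_union, Finset.mem_inter, Finset.mem_sdiff] at this
            tauto
          rw [h2z q.2 ⟨e, he, heV2⟩, mul_zero]
      case isFalse => rfl
end
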